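/- arXiv:2402.09994 — 6 statements merged into one kernel-verified Lean document; each statement's English description precedes it below -/
import Mathlib

section
/- Let u be a utility function on a finite set M of goods, b > 0 and M' > 0. If p^(k) ∈ F^u is a sequence of price vectors with sup{ b·log u(y) − ⟨p^(k),y⟩ : y ≥ 0, u(y) > 0 } < M' for every k, and p^(k) converges to a limit p̄ ∈ ℝ≥0^M, then p̄ ∈ F^u. -/
open scoped BigOperators

noncomputable section

/-- Scalar product `⟨p, x⟩ = ∑ j p_j x_j`. -/
def dot {M : Type*} [Fintype M] (p x : M → ℝ) : ℝ := ∑ j, p j * x j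

/-- A utility function on bundles of goods indexed by `M`. -/
structure IsUtility {M : Type*} [Fintype M] (u : (M → ℝ) → ℝ) : Prop where
  concave : ConcaveOn ℝ {x : M → ℝ | 0 ≤ x} u
  mono : ∀ ⦃x x' : M → ℝ⦄, 0 ≤ x → x ≤ x' → u x ≤ u x'
  zero : u 0 = 0
  exists_pos : ∃ x : M → ℝ, 0 ≤ x ∧ 0 < u x

/-- `F^u`: prices at which the Gale objective is bounded above for some budget. -/
def FsetU {M : Type*} [Fintype M] (u : (M → ℝ) → ℝ) : Set (M → ℝ) :=
  {q | 0 ≤ q ∧ ∃ b : ℝ, 0 < b ∧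
    BddAbove ((fun y => b * Real.log (u y) - dot q y) ''
      {y : M → ℝ | 0 ≤ y ∧ 0 < u y})}

/-- `F^u` is closed under limits of price sequences whose Gale objectives are
uniformly bounded by `M'`. -/
theorem Fset_limit_point {M : Type*} [Fintype M]
    (u : (M → ℝ) → ℝ) (hu : IsUtility u) (b M' : ℝ) (hb : 0 < b) (hM : 0 < M')
    (p : ℕ → M → ℝ) (hp : ∀ k, p k ∈ FsetU u)
    (hbound : ∀ k, ∀ y : M → ℝ, 0 ≤ y → 0 < u y →
      b * Real.log (u y) - dot (p k) y < M')
    (pbar : M → ℝ) (hpbar : 0 ≤ pbar)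
    (hlim : Filter.Tendsto p Filter.atTop (nhds pbar)) :
    pbar ∈ FsetU u := by
  refine ⟨hpbar, b, hb, M', ?_⟩
  rintro z ⟨y, ⟨hy0, hyu⟩, rfl⟩
  have hdot : Filter.Tendsto (fun k => dot (p k) y) Filter.atTop (nhds (dot pbar y)) := by
    unfold dot
    exact tendsto_finset_sum _ fun j _ =>
      ((continuous_apply j).continuousAt.tendsto.comp hlim).mul tendsto_const_nhds
  have h : Filter.Tendsto (fun k => b * Real.log (u y) - dot (p k) y) Filter.atTop
      (nhds (b * Real.log (u y) - dot pbar y)) := tendsto_const_nhds.sub hdot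
  exact le_of_tendsto h (Filter.Eventually.of_forall fun k => (hbound k y hy0 hyu).le)

end
end

section
/- Let u be a Σ-Gale-substitutes utility function on a finite set M of goods satisfying Assumption (*), and let x ∈ D^u(p,b) for some p ∈ ℝ≥0^M and b > 0. Then p ∈ F^u, and there exists y ∈ G^u(p,b) with y ≤ x componentwise. -/
open scoped BigOperators

noncomputable section

/-- Assumption (*). -/
def AssumptionStar {M : Type*} [Fintype M] (u : (M → ℝ) → ℝ) : Prop :=
  ∀ p : M → ℝ, 0 ≤ p → ∀ b : ℝ, 0 < b → ∀ x : ℕ → M → ℝ, (∀ k, 0 ≤ x k) →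
    Filter.Tendsto (fun k => dot p (x k)) Filter.atTop (nhds b) →
    ∀ M' : ℝ, Filter.Tendsto (fun k => u (x k)) Filter.atTop (nhds M') →
    ∃ xs : M → ℝ, 0 ≤ xs ∧ u xs = M' ∧ dot p xs ≤ b

/-- The demand correspondence `D^u(p,b)`. -/
def Demand {M : Type*} [Fintype M] (u : (M → ℝ) → ℝ) (p : M → ℝ) (b : ℝ) :
    Set (M → ℝ) :=
  {x | 0 ≤ x ∧ dot p x ≤ b ∧ ∀ z : M → ℝ, 0 ≤ z → dot p z ≤ b → u z ≤ u x}

/-- The Gale demand correspondence `G^u(q,b)`. -/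
def GaleDemand {M : Type*} [Fintype M] (u : (M → ℝ) → ℝ) (q : M → ℝ) (b : ℝ) :
    Set (M → ℝ) :=
  {y | 0 ≤ y ∧ 0 < u y ∧ ∀ z : M → ℝ, 0 ≤ z → 0 < u z →
    b * Real.log (u z) - dot q z ≤ b * Real.log (u y) - dot q y}

/-- The Gale-substitutes property. -/
def GaleSubstitutes {M : Type*} [Fintype M] (u : (M → ℝ) → ℝ) : Prop :=
  (∀ b : ℝ, 0 < b → ∀ q ∈ FsetU u, ∀ q' ∈ FsetU u, q' ≤ q →
    ∀ y ∈ GaleDemand u q b, ∃ y' ∈ GaleDemand u q' b,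
      ∀ j, q' j = q j → y' j ≤ y j) ∧
  ∀ b b' : ℝ, b' ≤ b → 0 < b' → ∀ q ∈ FsetU u, ∀ y ∈ GaleDemand u q b,
    ∃ y' ∈ GaleDemand u q b', y' ≤ y

/-- The Σ-Gale-substitutes property. -/
def SigmaGaleSubstitutes {M : Type*} [Fintype M] (u : (M → ℝ) → ℝ) : Prop :=
  GaleSubstitutes u ∧
  ((0 : M → ℝ) ∈ FsetU u → ∀ b : ℝ, 0 < b → ∀ q : M → ℝ, 0 ≤ q →
    ∀ y ∈ GaleDemand u (0 : M → ℝ) b, ∃ y' ∈ GaleDemand u q b, y' ≤ y)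
section Aux

variable {M : Type*} [Fintype M]

lemma dot_nonneg' {p z : M → ℝ} (hp : 0 ≤ p) (hz : 0 ≤ z) : 0 ≤ dot p z :=
  Finset.sum_nonneg fun j _ => mul_nonneg (hp j) (hz j)

lemma dot_zero_left' (z : M → ℝ) : dot (0 : M → ℝ) z = 0 := by
  simp [dot]

lemma dot_smul' (p z : M → ℝ) (a : ℝ) : dot p (a • z) = a * dot p z := by
  simp only [dot, Pi.smul_apply, smul_eq_mul, Finset.mul_sum]
  exact Finset.sum_congr rfl fun j _ => by ring

lemma dot_smul_add' (p z w : M → ℝ) (a c : ℝ) :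
    dot p (a • z + c • w) = a * dot p z + c * dot p w := by
  simp only [dot, Pi.add_apply, Pi.smul_apply, smul_eq_mul, Finset.mul_sum,
    ← Finset.sum_add_distrib]
  exact Finset.sum_congr rfl fun j _ => by ring

lemma scale_lb' {u : (M → ℝ) → ℝ} (hu : IsUtility u) {z : M → ℝ} (hz : 0 ≤ z)
    {t : ℝ} (h0 : 0 ≤ t) (h1 : t ≤ 1) : t * u z ≤ u (t • z) := by
  have h := hu.concave.2 (show z ∈ {x : M → ℝ | 0 ≤ x} from hz)
    (show (0 : M → ℝ) ∈ {x : M → ℝ | 0 ≤ x} from by simp [Set.mem_setOf_eq])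
    h0 (sub_nonneg.mpr h1) (by ring)
  simpa [hu.zero] using h

end Aux

/-- For a Σ-Gale-substitutes utility, below every demanded bundle there is a Gale
demanded bundle at the same prices and budget. -/
theorem gale_demand_below_demand {M : Type*} [Fintype M]
    (u : (M → ℝ) → ℝ) (hu : IsUtility u) (hstar : AssumptionStar u)
    (hsub : SigmaGaleSubstitutes u)
    (p : M → ℝ) (hp : 0 ≤ p) (b : ℝ) (hb : 0 < b)
    (x : M → ℝ) (hx : x ∈ Demand u p b) :
    p ∈ FsetU u ∧ ∃ y ∈ GaleDemand u p b, y ≤ x := by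
  obtain ⟨hx0, hxb, hopt⟩ := hx
  -- P2' : bundles costing more than b have utility at most (cost/b) · u x
  have P2 : ∀ z : M → ℝ, 0 ≤ z → b < dot p z → b * u z ≤ dot p z * u x := by
    intro z hz hbz
    have hτ0 : 0 < dot p z := hb.trans hbz
    have ht0 : (0:ℝ) ≤ b / dot p z := div_nonneg hb.le hτ0.le
    have ht1 : b / dot p z ≤ 1 := (div_le_one hτ0).mpr hbz.le
    have h1 : (b / dot p z) * u z ≤ u ((b / dot p z) • z) := scale_lb' hu hz ht0 ht1
    have hdz : dot p ((b / dot p z) • z) = b := by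
      rw [dot_smul']; field_simp
    have h2 : u ((b / dot p z) • z) ≤ u x := by
      refine hopt _ ?_ (by rw [hdz])
      exact smul_nonneg ht0 hz
    have h3 : (b / dot p z) * u z ≤ u x := h1.trans h2
    have h4 := mul_le_mul_of_nonneg_left h3 hτ0.le
    have h5 : dot p z * ((b / dot p z) * u z) = b * u z := by field_simp; try ring
    nlinarith [h4, h5]
  -- u x > 0
  have hX : 0 < u x := by
    obtain ⟨x₀, hx₀0, hx₀u⟩ := hu.exists_pos
    by_cases hc : dot p x₀ ≤ b
    · exact lt_of_lt_of_le hx₀u (hopt x₀ hx₀0 hc)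
    · push_neg at hc
      have := P2 x₀ hx₀0 hc
      nlinarith [hb.trans hc]
  -- p ∈ F^u
  have hbound : ∀ z : M → ℝ, 0 ≤ z → 0 < u z →
      b * Real.log (u z) - dot p z ≤ b * Real.log (u x) := by
    intro z hz0 hzu
    by_cases hτ : dot p z ≤ b
    · have h1 : u z ≤ u x := hopt z hz0 hτ
      have h2 : Real.log (u z) ≤ Real.log (u x) := Real.log_le_log hzu h1
      have h3 : 0 ≤ dot p z := dot_nonneg' hp hz0
      nlinarith [mul_le_mul_of_nonneg_left h2 hb.le]
    · push_neg at hτ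
      have h1 := P2 z hz0 hτ
      have hτ0 : 0 < dot p z := hb.trans hτ
      have hτb : 0 < dot p z / b := div_pos hτ0 hb
      have huz : u z ≤ dot p z / b * u x := by
        rw [div_mul_eq_mul_div, le_div_iff₀ hb]; nlinarith
      have l1 : Real.log (u z) ≤ Real.log (dot p z / b * u x) := Real.log_le_log hzu huz
      have l2 : Real.log (dot p z / b * u x) = Real.log (dot p z / b) + Real.log (u x) :=
        Real.log_mul hτb.ne' hX.ne'
      have l3 : Real.log (dot p z / b) ≤ dot p z / b - 1 :=
        Real.log_le_sub_one_of_pos hτb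
      have hbid : b * (dot p z / b) = dot p z := by field_simp
      have m1 := mul_le_mul_of_nonneg_left l1 hb.le
      rw [l2, mul_add] at m1
      have m3 := mul_le_mul_of_nonneg_left l3 hb.le
      rw [mul_sub, hbid] at m3
      nlinarith
  have hpF : p ∈ FsetU u := by
    refine ⟨hp, b, hb, ⟨b * Real.log (u x), ?_⟩⟩
    rintro v ⟨z, ⟨hz0, hzu⟩, rfl⟩
    exact hbound z hz0 hzu
  refine ⟨hpF, ?_⟩
  by_cases hbig : ∃ z : M → ℝ, 0 ≤ z ∧ u x < u z
  · -- Case A : u exceeds u x somewhere; use condition (ii) from budget B = u x / D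
    obtain ⟨z₀, hz₀0, hz₀u⟩ := hbig
    have hc₀ : b < dot p z₀ := by
      by_contra hcon
      push_neg at hcon
      exact absurd (hopt z₀ hz₀0 hcon) (not_le.mpr hz₀u)
    set A : Set ℝ := {r : ℝ | ∃ z : M → ℝ, 0 ≤ z ∧ b < dot p z ∧
      r = (u z - u x) / (dot p z - b)} with hA
    have hAne : A.Nonempty := ⟨_, z₀, hz₀0, hc₀, rfl⟩
    have hAbd : ∀ r ∈ A, r ≤ u x / b := by
      rintro r ⟨z, hz0, hbz, rfl⟩
      have h1 := P2 z hz0 hbz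
      rw [div_le_div_iff₀ (sub_pos.mpr hbz) hb]
      nlinarith
    have hAbdd : BddAbove A := ⟨u x / b, fun r hr => hAbd r hr⟩
    set D := sSup A with hD
    have hD0 : 0 < D := by
      have hmem : (u z₀ - u x) / (dot p z₀ - b) ∈ A := ⟨z₀, hz₀0, hc₀, rfl⟩
      have h1 : 0 < (u z₀ - u x) / (dot p z₀ - b) :=
        div_pos (sub_pos.mpr hz₀u) (sub_pos.mpr hc₀)
      exact lt_of_lt_of_le h1 (le_csSup hAbdd hmem)
    have hDub : D ≤ u x / b := csSup_le hAne hAbd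
    set B := u x / D with hB
    have hB0 : 0 < B := div_pos hX hD0
    have hbB : b ≤ B := by
      rw [hB, le_div_iff₀ hD0]
      nlinarith [(le_div_iff₀ hb).mp hDub]
    -- chord bounds on u
    have hchord : ∀ z : M → ℝ, 0 ≤ z → b < dot p z →
        u z ≤ u x + (dot p z - b) * D := by
      intro z hz0 hbz
      have hmem : (u z - u x) / (dot p z - b) ∈ A := ⟨z, hz0, hbz, rfl⟩
      have h1 := le_csSup hAbdd hmem
      rw [div_le_iff₀ (sub_pos.mpr hbz)] at h1
      linarith
    have hlow : ∀ z : M → ℝ, 0 ≤ z → dot p z ≤ b →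
        u z ≤ u x - (b - dot p z) * D := by
      intro z hz0 hτle
      rcases eq_or_lt_of_le hτle with heq | hlt
      · rw [heq]; simpa using hopt z hz0 (le_of_eq heq)
      · have hkey : D ≤ (u x - u z) / (b - dot p z) := by
          refine csSup_le hAne ?_
          rintro r ⟨w, hw0, hbw, rfl⟩
          have hcτ : 0 < dot p w - dot p z := by linarith
          have hlam0 : (0:ℝ) ≤ (b - dot p z) / (dot p w - dot p z) :=
            div_nonneg (by linarith) hcτ.le
          have hmu0 : (0:ℝ) ≤ (dot p w - b) / (dot p w - dot p z) :=
            div_nonneg (by linarith) hcτ.le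
          have hsum : (b - dot p z) / (dot p w - dot p z) +
              (dot p w - b) / (dot p w - dot p z) = 1 := by
            field_simp
            ring
          have hconc := hu.concave.2 (show w ∈ {x : M → ℝ | 0 ≤ x} from hw0)
            (show z ∈ {x : M → ℝ | 0 ≤ x} from hz0) hlam0 hmu0 hsum
          have hwz0 : 0 ≤ ((b - dot p z) / (dot p w - dot p z)) • w +
              ((dot p w - b) / (dot p w - dot p z)) • z :=
            add_nonneg (smul_nonneg hlam0 hw0) (smul_nonneg hmu0 hz0)
          have hdot : dot p (((b - dot p z) / (dot p w - dot p z)) • w +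
              ((dot p w - b) / (dot p w - dot p z)) • z) = b := by
            rw [dot_smul_add']
            field_simp
            try ring
          have hle : u (((b - dot p z) / (dot p w - dot p z)) • w +
              ((dot p w - b) / (dot p w - dot p z)) • z) ≤ u x :=
            hopt _ hwz0 (by rw [hdot])
          have h2 : ((b - dot p z) / (dot p w - dot p z)) * u w +
              ((dot p w - b) / (dot p w - dot p z)) * u z ≤ u x := by
            have := hconc.trans hle
            simpa [smul_eq_mul] using this
          rw [div_le_div_iff₀ (by linarith : (0:ℝ) < dot p w - b) (by linarith : (0:ℝ) < b - dot p z)]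
          have h3 : (b - dot p z) * u w + (dot p w - b) * u z ≤
              (dot p w - dot p z) * u x := by
            have h4 := mul_le_mul_of_nonneg_left h2 hcτ.le
            have h5 : (dot p w - dot p z) * (((b - dot p z) / (dot p w - dot p z)) * u w +
                ((dot p w - b) / (dot p w - dot p z)) * u z) =
                (b - dot p z) * u w + (dot p w - b) * u z := by
              field_simp
              try ring
            linarith [h5 ▸ h4]
          nlinarith
        rw [le_div_iff₀ (by linarith : (0:ℝ) < b - dot p z)] at hkey
        linarith
    -- x is a Gale demand at budget B
    have hxGB : x ∈ GaleDemand u p B := by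
      refine ⟨hx0, hX, fun z hz0 hzu => ?_⟩
      have hZR : u z ≤ u x + (dot p z - b) * D := by
        by_cases hτ : dot p z ≤ b
        · have := hlow z hz0 hτ; nlinarith
        · push_neg at hτ; exact hchord z hz0 hτ
      have hR0 : 0 < u x + (dot p z - b) * D := lt_of_lt_of_le hzu hZR
      have hlog1 : Real.log (u z) ≤ Real.log (u x + (dot p z - b) * D) :=
        Real.log_le_log hzu hZR
      have hlog2 : Real.log (u x + (dot p z - b) * D) - Real.log (u x) ≤
          (u x + (dot p z - b) * D) / u x - 1 := by
        rw [← Real.log_div hR0.ne' hX.ne']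
        exact Real.log_le_sub_one_of_pos (div_pos hR0 hX)
      have hBRid : B * ((u x + (dot p z - b) * D) / u x - 1) = dot p z - b := by
        rw [hB]; field_simp; try ring
      have m1 := mul_le_mul_of_nonneg_left hlog1 hB0.le
      have m2 := mul_le_mul_of_nonneg_left
        (show Real.log (u x + (dot p z - b) * D) ≤
          Real.log (u x) + ((u x + (dot p z - b) * D) / u x - 1) by linarith) hB0.le
      rw [mul_add] at m2
      linarith
    obtain ⟨y, hyG, hyx⟩ := hsub.1.2 B b hbB hb p hpF x hxGB
    exact ⟨y, hyG, hyx⟩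
  · -- Case B : u is globally bounded by u x; use the Σ condition
    push_neg at hbig
    have h0F : (0 : M → ℝ) ∈ FsetU u := by
      refine ⟨le_refl _, b, hb, ⟨b * Real.log (u x), ?_⟩⟩
      rintro v ⟨z, ⟨hz0, hzu⟩, rfl⟩
      simp only [dot_zero_left']
      have h2 : Real.log (u z) ≤ Real.log (u x) := Real.log_le_log hzu (hbig z hz0)
      nlinarith [mul_le_mul_of_nonneg_left h2 hb.le]
    have hxG0 : x ∈ GaleDemand u (0 : M → ℝ) b := by
      refine ⟨hx0, hX, fun z hz0 hzu => ?_⟩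
      rw [dot_zero_left', dot_zero_left']
      have h2 : Real.log (u z) ≤ Real.log (u x) := Real.log_le_log hzu (hbig z hz0)
      nlinarith [mul_le_mul_of_nonneg_left h2 hb.le]
    obtain ⟨y, hyG, hyx⟩ := hsub.2 h0F b hb p hp x hxG0
    exact ⟨y, hyG, hyx⟩

end
end

section
/- Let A be a finite set of agents and M a finite set of goods with one unit of each good, budgets b_i > 0, and utility functions u_i each satisfying Assumption (*) and the Σ-Gale-substitutes property. For any competitive equilibrium (x, p) and any q ∈ ∩_{i∈A} F^{u_i} with q ≤ p componentwise, there exist y_i ∈ G^{u_i}(q, b_i) for all i ∈ A such that ∑_{i∈A} y_{ij} ≤ 1 for every good j with q_j = p_j. -/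
open scoped BigOperators

noncomputable section

/-- Competitive equilibrium in a Fisher market with one unit of each good. -/
def IsCompetitiveEq {A M : Type*} [Fintype A] [Fintype M]
    (u : A → (M → ℝ) → ℝ) (b : A → ℝ) (x : A → M → ℝ) (p : M → ℝ) : Prop :=
  0 ≤ p ∧ (∀ i, x i ∈ Demand (u i) p (b i)) ∧
    (∀ j, ∑ i, x i j ≤ 1) ∧ ∀ j, 0 < p j → ∑ i, x i j = 1

namespace AggGale

variable {M : Type*} [Fintype M]

lemma dot_nonneg {p z : M → ℝ} (hp : 0 ≤ p) (hz : 0 ≤ z) : 0 ≤ dot p z :=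
  Finset.sum_nonneg fun j _ => mul_nonneg (hp j) (hz j)

lemma dot_smul (p z : M → ℝ) (t : ℝ) : dot p (t • z) = t * dot p z := by
  unfold dot
  rw [Finset.mul_sum]
  exact Finset.sum_congr rfl fun j _ => by
    simp [Pi.smul_apply, smul_eq_mul]; ring

lemma dot_comb (p z' z : M → ℝ) (a c : ℝ) :
    dot p (a • z' + c • z) = a * dot p z' + c * dot p z := by
  unfold dot
  rw [Finset.mul_sum, Finset.mul_sum, ← Finset.sum_add_distrib]
  exact Finset.sum_congr rfl fun j _ => by
    simp [Pi.add_apply, Pi.smul_apply, smul_eq_mul]; ring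

lemma u_nonneg {u : (M → ℝ) → ℝ} (hu : IsUtility u) {z : M → ℝ} (hz : 0 ≤ z) :
    0 ≤ u z := by
  have h := hu.mono (le_refl (0 : M → ℝ)) hz
  simpa [hu.zero] using h

lemma scale_ge {u : (M → ℝ) → ℝ} (hu : IsUtility u) {z : M → ℝ} (hz : 0 ≤ z)
    {t : ℝ} (ht0 : 0 ≤ t) (ht1 : t ≤ 1) : t * u z ≤ u (t • z) := by
  have hzmem : z ∈ {x : M → ℝ | 0 ≤ x} := hz
  have h0mem : (0 : M → ℝ) ∈ {x : M → ℝ | 0 ≤ x} := le_refl (0 : M → ℝ)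
  have h := hu.concave.2 hzmem h0mem ht0 (by linarith : (0:ℝ) ≤ 1 - t)
    (by ring : t + (1 - t) = 1)
  simpa [hu.zero, smul_eq_mul] using h

lemma log_combo {a c t : ℝ} (ha : 0 < a) (hc : 0 < c) (ht0 : 0 ≤ t) (ht1 : t ≤ 1) :
    (1 - t) * Real.log a + t * Real.log c ≤ Real.log ((1 - t) * a + t * c) := by
  have h := strictConcaveOn_log_Ioi.concaveOn.2 (Set.mem_Ioi.mpr ha)
    (Set.mem_Ioi.mpr hc) (by linarith : (0:ℝ) ≤ 1 - t) ht0 (by ring)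
  simpa [smul_eq_mul] using h

lemma three_point {u : (M → ℝ) → ℝ} (hu : IsUtility u) {p x : M → ℝ} {b : ℝ}
    (hx : x ∈ Demand u p b)
    {z' z : M → ℝ} (hz' : 0 ≤ z') (huz' : 0 < u z') (hz : 0 ≤ z) (huz : 0 < u z)
    (hm' : dot p z' < b) (hm : b < dot p z) :
    (b - dot p z') * (Real.log (u z) - Real.log (u x)) ≤
      (dot p z - b) * (Real.log (u x) - Real.log (u z')) := by
  have hmm' : 0 < dot p z - dot p z' := by linarith
  set t : ℝ := (b - dot p z') / (dot p z - dot p z') with htdef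
  have ht0 : 0 < t := div_pos (by linarith) hmm'
  have ht1 : t < 1 := (div_lt_one hmm').mpr (by linarith)
  have htm : t * (dot p z - dot p z') = b - dot p z' := div_mul_cancel₀ _ hmm'.ne'
  have h1t : (1 - t) * (dot p z - dot p z') = dot p z - b := by
    have e : (1 - t) * (dot p z - dot p z')
        = (dot p z - dot p z') - t * (dot p z - dot p z') := by ring
    rw [e, htm]; ring
  set w := (1 - t) • z' + t • z with hwdef
  have hw0 : 0 ≤ w := add_nonneg (smul_nonneg (by linarith) hz') (smul_nonneg ht0.le hz)
  have hdw : dot p w = b := by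
    rw [hwdef, dot_comb]
    linear_combination htm
  have hz'mem : z' ∈ {x : M → ℝ | 0 ≤ x} := hz'
  have hzmem : z ∈ {x : M → ℝ | 0 ≤ x} := hz
  have hcomb := hu.concave.2 hz'mem hzmem (by linarith : (0:ℝ) ≤ 1 - t) ht0.le
    (by ring : (1 - t) + t = 1)
  simp only [smul_eq_mul] at hcomb
  have hwle : u w ≤ u x := hx.2.2 w hw0 (le_of_eq hdw)
  have hcombpos : 0 < (1 - t) * u z' + t * u z :=
    add_pos (mul_pos (by linarith) huz') (mul_pos ht0 huz)
  have hlog1 : Real.log ((1 - t) * u z' + t * u z) ≤ Real.log (u x) :=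
    Real.log_le_log hcombpos (le_trans hcomb hwle)
  have key : (1 - t) * Real.log (u z') + t * Real.log (u z) ≤ Real.log (u x) :=
    le_trans (log_combo huz' huz ht0.le ht1.le) hlog1
  have key' : t * (Real.log (u z) - Real.log (u x))
      ≤ (1 - t) * (Real.log (u x) - Real.log (u z')) := by ring_nf; ring_nf at key; linarith
  have h2 := mul_le_mul_of_nonneg_left key' hmm'.le
  have e1 : (dot p z - dot p z') * (t * (Real.log (u z) - Real.log (u x)))
      = (b - dot p z') * (Real.log (u z) - Real.log (u x)) := by
    rw [show (dot p z - dot p z') * (t * (Real.log (u z) - Real.log (u x)))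
        = (t * (dot p z - dot p z')) * (Real.log (u z) - Real.log (u x)) from by ring, htm]
  have e2 : (dot p z - dot p z') * ((1 - t) * (Real.log (u x) - Real.log (u z')))
      = (dot p z - b) * (Real.log (u x) - Real.log (u z')) := by
    rw [show (dot p z - dot p z') * ((1 - t) * (Real.log (u x) - Real.log (u z')))
        = ((1 - t) * (dot p z - dot p z')) * (Real.log (u x) - Real.log (u z')) from by ring, h1t]
  linarith [h2, e1.symm.le, e2.le]

lemma per_agent {u : (M → ℝ) → ℝ} (hu : IsUtility u) (hsub : SigmaGaleSubstitutes u)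
    {b : ℝ} (hb : 0 < b) {x p : M → ℝ} (hp : 0 ≤ p) (hx : x ∈ Demand u p b)
    {q : M → ℝ} (hq0 : 0 ≤ q) (hqF : q ∈ FsetU u) (hqp : q ≤ p) :
    ∃ y, y ∈ GaleDemand u q b ∧ ∀ j, q j = p j → y j ≤ x j := by
  obtain ⟨z₁, hz₁0, hz₁pos⟩ := hu.exists_pos
  -- the equilibrium utility is positive
  have hU : 0 < u x := by
    rcases le_or_gt (dot p z₁) b with h | h
    · exact lt_of_lt_of_le hz₁pos (hx.2.2 z₁ hz₁0 h)
    · have hdz : 0 < dot p z₁ := lt_trans hb h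
      have ht0 : 0 < b / dot p z₁ := div_pos hb hdz
      have ht1 : b / dot p z₁ ≤ 1 := le_of_lt ((div_lt_one hdz).mpr h)
      have h1 : (b / dot p z₁) * u z₁ ≤ u ((b / dot p z₁) • z₁) := scale_ge hu hz₁0 ht0.le ht1
      have h2 : u ((b / dot p z₁) • z₁) ≤ u x := hx.2.2 _ (smul_nonneg ht0.le hz₁0)
        (by rw [dot_smul, div_mul_cancel₀ _ hdz.ne'])
      nlinarith [mul_pos ht0 hz₁pos]
  by_cases hG : ∀ z : M → ℝ, 0 ≤ z → u z ≤ u x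
  · -- `u x` is the global maximum; use the Σ-property from the zero price
    have h0F : (0 : M → ℝ) ∈ FsetU u := by
      refine ⟨le_refl (0 : M → ℝ), b, hb, ⟨b * Real.log (u x), ?_⟩⟩
      rintro r ⟨z, ⟨hz0, hzpos⟩, rfl⟩
      have hd0 : dot (0 : M → ℝ) z = 0 := by simp [dot]
      have hlog : Real.log (u z) ≤ Real.log (u x) := Real.log_le_log hzpos (hG z hz0)
      have := mul_le_mul_of_nonneg_left hlog hb.le
      simp only [hd0]
      linarith
    have hxG0 : x ∈ GaleDemand u (0 : M → ℝ) b := by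
      refine ⟨hx.1, hU, ?_⟩
      intro z hz0 hzpos
      have hd0 : dot (0 : M → ℝ) z = 0 := by simp [dot]
      have hd0' : dot (0 : M → ℝ) x = 0 := by simp [dot]
      have hlog : Real.log (u z) ≤ Real.log (u x) := Real.log_le_log hzpos (hG z hz0)
      rw [hd0, hd0']
      have := mul_le_mul_of_nonneg_left hlog hb.le
      linarith
    obtain ⟨y, hyG, hyle⟩ := hsub.2 h0F b hb q hq0 x hxG0
    exact ⟨y, hyG, fun j _ => hyle j⟩
  · push_neg at hG
    obtain ⟨z₀, hz₀0, hz₀gt⟩ := hG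
    have hm₀ : b < dot p z₀ := by
      by_contra h
      push_neg at h
      exact absurd (hx.2.2 z₀ hz₀0 h) (not_le.mpr hz₀gt)
    have huz₀ : 0 < u z₀ := lt_trans hU hz₀gt
    -- below-budget bundles have strictly smaller utility
    have hNG : ∀ z : M → ℝ, 0 ≤ z → dot p z < b → u z < u x := by
      intro z hz hzb
      by_contra h
      push_neg at h
      have hmm : 0 < dot p z₀ - dot p z := by linarith
      set t := (b - dot p z) / (dot p z₀ - dot p z) with htdef
      have ht0 : 0 < t := div_pos (by linarith) hmm
      have ht1 : t < 1 := (div_lt_one hmm).mpr (by linarith)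
      have htm : t * (dot p z₀ - dot p z) = b - dot p z := div_mul_cancel₀ _ hmm.ne'
      set w := (1 - t) • z + t • z₀ with hwdef
      have hw0 : 0 ≤ w := add_nonneg (smul_nonneg (by linarith) hz) (smul_nonneg ht0.le hz₀0)
      have hdw : dot p w = b := by
        rw [hwdef, dot_comb]
        linear_combination htm
      have hzmem : z ∈ {x : M → ℝ | 0 ≤ x} := hz
      have hz₀mem : z₀ ∈ {x : M → ℝ | 0 ≤ x} := hz₀0
      have hcomb := hu.concave.2 hzmem hz₀mem (by linarith : (0:ℝ) ≤ 1 - t) ht0.le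
        (by ring : (1 - t) + t = 1)
      simp only [smul_eq_mul] at hcomb
      have hwle : u w ≤ u x := hx.2.2 w hw0 (le_of_eq hdw)
      nlinarith [mul_pos ht0 (sub_pos.mpr hz₀gt),
        mul_nonneg (by linarith : (0:ℝ) ≤ 1 - t) (sub_nonneg.mpr h)]
    -- full budget is spent
    have hβ : dot p x = b := by
      rcases lt_or_eq_of_le hx.2.1 with h | h
      · exact absurd (hNG x hx.1 h) (lt_irrefl _)
      · exact h
    -- scaling bound for expensive bundles
    have hlogbound : ∀ z : M → ℝ, 0 ≤ z → 0 < u z → b < dot p z →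
        Real.log (u z) - Real.log (u x) ≤ dot p z / b - 1 := by
      intro z hz0 hzpos hzb
      have hmpos : 0 < dot p z := lt_trans hb hzb
      have ht0 : 0 < b / dot p z := div_pos hb hmpos
      have ht1 : b / dot p z ≤ 1 := le_of_lt ((div_lt_one hmpos).mpr hzb)
      have h1 : (b / dot p z) * u z ≤ u ((b / dot p z) • z) := scale_ge hu hz0 ht0.le ht1
      have h2 : u ((b / dot p z) • z) ≤ u x := hx.2.2 _ (smul_nonneg ht0.le hz0)
        (by rw [dot_smul, div_mul_cancel₀ _ hmpos.ne'])
      have hscale : u z ≤ (dot p z / b) * u x := by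
        have key : (b / dot p z) * u z ≤ u x := le_trans h1 h2
        have h3 := mul_le_mul_of_nonneg_left key (le_of_lt (div_pos hmpos hb))
        have e : (dot p z / b) * ((b / dot p z) * u z) = u z := by
          field_simp
        rwa [e] at h3
      have h4 : Real.log (u z) ≤ Real.log ((dot p z / b) * u x) :=
        Real.log_le_log hzpos hscale
      rw [Real.log_mul (by positivity) hU.ne'] at h4
      have h5 : Real.log (dot p z / b) ≤ dot p z / b - 1 :=
        Real.log_le_sub_one_of_pos (by positivity)
      linarith
    -- p is in F^u
    have hpF : p ∈ FsetU u := by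
      refine ⟨hp, b, hb, ⟨b * Real.log (u x), ?_⟩⟩
      rintro r ⟨z, ⟨hz0, hzpos⟩, rfl⟩
      simp only
      rcases le_or_gt (dot p z) b with h | h
      · have h1 : Real.log (u z) ≤ Real.log (u x) :=
          Real.log_le_log hzpos (hx.2.2 z hz0 h)
        have h2 : 0 ≤ dot p z := dot_nonneg hp hz0
        have := mul_le_mul_of_nonneg_left h1 hb.le
        linarith
      · have h1 := hlogbound z hz0 hzpos h
        have h2 := mul_le_mul_of_nonneg_left h1 hb.le
        have e : b * (dot p z / b - 1) = dot p z - b := by field_simp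
        nlinarith
    -- the set of inverse slopes
    set 𝒮 : Set ℝ := insert 0 {r : ℝ | ∃ z : M → ℝ, 0 ≤ z ∧ 0 < u z ∧ dot p z < b ∧
        r = (b - dot p z) / (Real.log (u x) - Real.log (u z))} with h𝒮def
    have h𝒮ne : 𝒮.Nonempty := ⟨0, Set.mem_insert _ _⟩
    have hDz₀ : 0 < Real.log (u z₀) - Real.log (u x) :=
      sub_pos.mpr (Real.log_lt_log hU hz₀gt)
    have h𝒮bdd : BddAbove 𝒮 := by
      refine ⟨max 0 ((dot p z₀ - b) / (Real.log (u z₀) - Real.log (u x))), ?_⟩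
      rintro r hr
      rcases Set.mem_insert_iff.mp hr with rfl | ⟨z, hz0, hzpos, hzb, rfl⟩
      · exact le_max_left _ _
      · refine le_trans ?_ (le_max_right _ _)
        have hD : 0 < Real.log (u x) - Real.log (u z) :=
          sub_pos.mpr (Real.log_lt_log hzpos (hNG z hz0 hzb))
        rw [div_le_div_iff₀ hD hDz₀]
        exact three_point hu hx hz0 hzpos hz₀0 huz₀ hzb hm₀
    have hS0 : 0 ≤ sSup 𝒮 := le_csSup h𝒮bdd (Set.mem_insert _ _)
    set B := max b (sSup 𝒮) with hBdef
    have hbB : b ≤ B := le_max_left _ _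
    have hB0 : 0 < B := lt_of_lt_of_le hb hbB
    -- x is a Gale demand at price p with budget B
    have hxG : x ∈ GaleDemand u p B := by
      refine ⟨hx.1, hU, ?_⟩
      intro z hz0 hzpos
      rw [hβ]
      rcases lt_or_ge (dot p z) b with h | h
      · have hD : 0 < Real.log (u x) - Real.log (u z) :=
          sub_pos.mpr (Real.log_lt_log hzpos (hNG z hz0 h))
        have h1 : (b - dot p z) / (Real.log (u x) - Real.log (u z)) ≤ B := by
          refine le_trans (le_csSup h𝒮bdd ?_) (le_max_right _ _)
          exact Set.mem_insert_of_mem _ ⟨z, hz0, hzpos, h, rfl⟩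
        have h2 : b - dot p z ≤ B * (Real.log (u x) - Real.log (u z)) :=
          (div_le_iff₀ hD).mp h1
        nlinarith
      · rcases le_or_gt (u z) (u x) with h' | h'
        · have h1 : Real.log (u z) ≤ Real.log (u x) := Real.log_le_log hzpos h'
          have := mul_le_mul_of_nonneg_left h1 hB0.le
          linarith
        · have hmb : b < dot p z := by
            rcases lt_or_eq_of_le h with h'' | h''
            · exact h''
            · exact absurd (hx.2.2 z hz0 (le_of_eq h''.symm)) (not_le.mpr h')
          have hD : 0 < Real.log (u z) - Real.log (u x) :=
            sub_pos.mpr (Real.log_lt_log hU h')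
          have hb1 : b * (Real.log (u z) - Real.log (u x)) ≤ dot p z - b := by
            have h1 := hlogbound z hz0 hzpos hmb
            have h2 := mul_le_mul_of_nonneg_left h1 hb.le
            have e : b * (dot p z / b - 1) = dot p z - b := by field_simp
            linarith
          have hb2 : sSup 𝒮 * (Real.log (u z) - Real.log (u x)) ≤ dot p z - b := by
            have hSle : sSup 𝒮 ≤ (dot p z - b) / (Real.log (u z) - Real.log (u x)) := by
              refine csSup_le h𝒮ne ?_
              rintro r hr
              rcases Set.mem_insert_iff.mp hr with rfl | ⟨z', hz'0, hz'pos, hz'b, rfl⟩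
              · exact div_nonneg (by linarith) hD.le
              · have hD' : 0 < Real.log (u x) - Real.log (u z') :=
                  sub_pos.mpr (Real.log_lt_log hz'pos (hNG z' hz'0 hz'b))
                rw [div_le_div_iff₀ hD' hD]
                exact three_point hu hx hz'0 hz'pos hz0 hzpos hz'b hmb
            have h3 := mul_le_mul_of_nonneg_right hSle hD.le
            have e : (dot p z - b) / (Real.log (u z) - Real.log (u x))
                * (Real.log (u z) - Real.log (u x)) = dot p z - b :=
              div_mul_cancel₀ _ hD.ne'
            linarith
          have hBD : B * (Real.log (u z) - Real.log (u x)) ≤ dot p z - b := by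
            rcases max_choice b (sSup 𝒮) with h'' | h'' <;> rw [hBdef, h'']
            · exact hb1
            · exact hb2
          nlinarith
    obtain ⟨yhat, hyhatG, hyhatle⟩ := hsub.1.2 B b hbB hb p hpF x hxG
    obtain ⟨y, hyG, hyle⟩ := hsub.1.1 b hb p hpF q hqF hqp yhat hyhatG
    exact ⟨y, hyG, fun j hj => le_trans (hyle j hj) (hyhatle j)⟩

end AggGale

/-- For Σ-Gale-substitutes utilities and prices `q ≤ p` below equilibrium prices,
there is an aggregate Gale demand not exceeding the supply on goods where
`q j = p j`. -/
theorem aggregate_gale_demand_bound {A M : Type*} [Fintype A] [Fintype M]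
    (u : A → (M → ℝ) → ℝ) (hu : ∀ i, IsUtility (u i))
    (hstar : ∀ i, AssumptionStar (u i))
    (hsub : ∀ i, SigmaGaleSubstitutes (u i))
    (b : A → ℝ) (hb : ∀ i, 0 < b i)
    (x : A → M → ℝ) (p : M → ℝ) (hxp : IsCompetitiveEq u b x p)
    (q : M → ℝ) (hq0 : 0 ≤ q) (hqF : ∀ i, q ∈ FsetU (u i)) (hqp : q ≤ p) :
    ∃ y : A → M → ℝ, (∀ i, y i ∈ GaleDemand (u i) q (b i)) ∧
      ∀ j, q j = p j → ∑ i, y i j ≤ 1 := by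
  obtain ⟨hp, hd, hsupply, _⟩ := hxp
  have H : ∀ i, ∃ y, y ∈ GaleDemand (u i) q (b i) ∧ ∀ j, q j = p j → y j ≤ x i j :=
    fun i => AggGale.per_agent (hu i) (hsub i) (hb i) hp (hd i) hq0 (hqF i) hqp
  choose y hy1 hy2 using H
  refine ⟨y, hy1, fun j hj => ?_⟩
  calc ∑ i, y i j ≤ ∑ i, x i j := Finset.sum_le_sum fun i _ => hy2 i j hj
    _ ≤ 1 := hsupply j

end
end

section
/- Let u(x) = ∑_{j∈M} v_j(x_j) be a separable utility function on a finite set M of goods, b > 0, and q ∈ F^u. Then every y ∈ G^u(q,b) satisfies u(y) > 0. Furthermore, y ∈ G^u(q,b) if and only if there exist supergradients g_j ∈ ∂^∧v_j(y_j) for each j ∈ M satisfying: (i) g_j ≥ 0, and (ii) g_j ≤ q_j·u(y)/b, with equality whenever y_j > 0. -/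
open scoped BigOperators

noncomputable section

/-- The data of a separable utility function `u(x) = ∑ j v_j(x_j)`: each `v_j` is
concave and non-decreasing on `ℝ≥0` with `v_j(0) = 0`, and the sum is positive
somewhere. -/
structure IsSepUtility {M : Type*} [Fintype M] (v : M → ℝ → ℝ) : Prop where
  concave : ∀ j, ConcaveOn ℝ (Set.Ici (0 : ℝ)) (v j)
  mono : ∀ j, MonotoneOn (v j) (Set.Ici (0 : ℝ))
  zero : ∀ j, v j 0 = 0
  exists_pos : ∃ x : M → ℝ, 0 ≤ x ∧ 0 < ∑ j, v j (x j)

/-- The separable utility function determined by the coordinate utilities `v`. -/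
def sepU {M : Type*} [Fintype M] (v : M → ℝ → ℝ) : (M → ℝ) → ℝ :=
  fun x => ∑ j, v j (x j)

/-- `g` is a supergradient of the univariate concave function `v` at `α` over `ℝ≥0`. -/
def IsSupergradient1 (v : ℝ → ℝ) (α g : ℝ) : Prop :=
  ∀ β : ℝ, 0 ≤ β → v β ≤ v α + g * (β - α)

private lemma log_le_add (a c : ℝ) (ha : 0 < a) (hc : 0 < c) :
    Real.log a ≤ Real.log c + (a - c) / c := by
  have h := Real.log_le_sub_one_of_pos (show (0:ℝ) < a / c by positivity)
  rw [Real.log_div ha.ne' hc.ne'] at h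
  have h2 : a / c - 1 = (a - c) / c := by field_simp
  rw [h2] at h
  linarith

set_option maxHeartbeats 1000000 in
/-- The Gale price `q j · u(y) / b` is a supergradient of `v j` at `y j`. -/
private lemma gale_supergrad {M : Type*} [Fintype M]
    (v : M → ℝ → ℝ) (hv : IsSepUtility v) (b : ℝ) (hb : 0 < b)
    (q : M → ℝ) (hq0 : 0 ≤ q)
    (y : M → ℝ) (hy : y ∈ GaleDemand (sepU v) q b) (j : M) :
    IsSupergradient1 (v j) (y j) (q j * sepU v y / b) := by
  classical
  obtain ⟨hy0, hU, hmax⟩ := hy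
  set U := sepU v y with hUdef
  set g := q j * U / b with hgdef
  have hbg : b * g = q j * U := by rw [hgdef]; field_simp
  clear_value g
  have hyj : (0:ℝ) ≤ y j := by simpa using hy0 j
  have hqj : (0:ℝ) ≤ q j := by simpa using hq0 j
  have hg0 : 0 ≤ g := by rw [hgdef]; positivity
  -- optimality consequence, log form
  have OClog : ∀ s : ℝ, 0 ≤ y j + s → 0 < U + (v j (y j + s) - v j (y j)) →
      b * Real.log (U + (v j (y j + s) - v j (y j))) - b * Real.log U ≤ q j * s := by
    intro s hzj hpos
    set z := Function.update y j (y j + s) with hzdef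
    have hz0 : (0:M → ℝ) ≤ z := by
      intro k
      by_cases h : k = j
      · subst h; simpa [hzdef] using hzj
      · simpa [hzdef, Function.update_of_ne h] using hy0 k
    have hzU : sepU v z = U + (v j (y j + s) - v j (y j)) := by
      have hterm : ∀ k : M, v k (z k) =
          v k (y k) + (if k = j then v j (y j + s) - v j (y j) else 0) := by
        intro k
        by_cases h : k = j
        · subst h
          simp only [hzdef, Function.update_self, if_pos]
          ring
        · simp [hzdef, Function.update_of_ne h, h]
      show (∑ k, v k (z k)) = U + (v j (y j + s) - v j (y j))
      rw [Finset.sum_congr rfl fun k _ => hterm k, Finset.sum_add_distrib,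
        Finset.sum_ite_eq' Finset.univ j]
      simp only [Finset.mem_univ, if_true]
      rw [hUdef]
      rfl
    have hzdot : dot q z = dot q y + q j * s := by
      have hterm : ∀ k : M, q k * z k =
          q k * y k + (if k = j then q j * s else 0) := by
        intro k
        by_cases h : k = j
        · subst h
          simp only [hzdef, Function.update_self, if_pos]
          ring
        · simp [hzdef, Function.update_of_ne h, h]
      show (∑ k, q k * z k) = (∑ k, q k * y k) + q j * s
      rw [Finset.sum_congr rfl fun k _ => hterm k, Finset.sum_add_distrib,
        Finset.sum_ite_eq' Finset.univ j]
      simp only [Finset.mem_univ, if_true]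
    have h := hmax z hz0 (by rw [hzU]; exact hpos)
    rw [hzU, hzdot] at h
    linarith
  clear_value U
  -- optimality consequence, linearized form
  have OC : ∀ s : ℝ, 0 ≤ y j + s → 0 < U + (v j (y j + s) - v j (y j)) →
      b * (v j (y j + s) - v j (y j)) ≤
        q j * s * (U + (v j (y j + s) - v j (y j))) := by
    intro s hzj hpos
    have h1 := OClog s hzj hpos
    have h2 := log_le_add U (U + (v j (y j + s) - v j (y j))) hU hpos
    set Δ := v j (y j + s) - v j (y j) with hΔ
    clear_value Δ
    have h3 : Δ / (U + Δ) ≤ Real.log (U + Δ) - Real.log U := by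
      have e : (U - (U + Δ)) / (U + Δ) = -(Δ / (U + Δ)) := by ring
      rw [e] at h2; linarith
    have h4 : b * Δ / (U + Δ) ≤ q j * s := by
      rw [mul_div_assoc]
      calc b * (Δ / (U + Δ)) ≤ b * (Real.log (U + Δ) - Real.log U) :=
            mul_le_mul_of_nonneg_left h3 hb.le
        _ ≤ q j * s := by linarith
    exact (div_le_iff₀ hpos).mp h4
  -- concavity chord estimate
  have chord : ∀ t s : ℝ, 0 ≤ y j + t → 0 < s / t → s / t ≤ 1 →
      (s / t) * (v j (y j + t) - v j (y j)) ≤ v j (y j + s) - v j (y j) := by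
    intro t s hβ h1 h2
    have ht : t ≠ 0 := by
      rintro rfl
      simp at h1
    have hc := (hv.concave j).2 (Set.mem_Ici.mpr hβ) (Set.mem_Ici.mpr hyj)
        (le_of_lt h1) (by linarith : (0:ℝ) ≤ 1 - s / t) (by ring)
    have harg : (s / t) * (y j + t) + (1 - s / t) * (y j) = y j + s := by
      field_simp
      ring
    rw [smul_eq_mul, smul_eq_mul, smul_eq_mul, smul_eq_mul, harg] at hc
    linarith [hc]
  -- main supergradient claim
  intro β hβ
  have hbt : y j + (β - y j) = β := by ring
  set t := β - y j with htdef
  clear_value t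
  rcases lt_trichotomy t 0 with ht | ht | ht
  · -- decrease coordinate j : t < 0
    have hβ0 : 0 ≤ y j + t := by rw [hbt]; exact hβ
    have hΔt0 : v j (y j + t) - v j (y j) ≤ 0 := by
      have := hv.mono j (Set.mem_Ici.mpr hβ0) (Set.mem_Ici.mpr hyj) (by linarith)
      linarith
    by_contra hcon
    push_neg at hcon
    rw [← hbt] at hcon
    have hεpos0 : 0 < (v j (y j + t) - v j (y j)) - g * t := by linarith
    set Δt := v j (y j + t) - v j (y j) with hΔtdef
    clear_value Δt
    set ε := Δt - g * t with hεdef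
    clear_value ε
    have hεpos : 0 < ε := hεpos0
    set E := 1 - Δt with hEdef
    clear_value E
    have hE1 : (1:ℝ) ≤ E := by rw [hEdef]; linarith
    have hE0 : 0 < E := by linarith
    have hnt : (0:ℝ) < -t := by linarith
    have hqE : (0:ℝ) < 1 + q j * E := by positivity
    set r := min (-t) (min ((-t) * U / (2 * E)) (b * ε / (2 * (1 + q j * E)))) with hrdef
    have hr0 : 0 < r := by
      rw [hrdef]
      refine lt_min hnt (lt_min ?_ ?_)
      · exact div_pos (mul_pos hnt hU) (by positivity)
      · exact div_pos (mul_pos hb hεpos) (by positivity)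
    have hrt : r ≤ -t := by rw [hrdef]; exact min_le_left _ _
    have hrA : r ≤ (-t) * U / (2 * E) := by
      rw [hrdef]; exact le_trans (min_le_right _ _) (min_le_left _ _)
    have hrB : r ≤ b * ε / (2 * (1 + q j * E)) := by
      rw [hrdef]; exact le_trans (min_le_right _ _) (min_le_right _ _)
    clear_value r
    set s := -r with hsdef
    clear_value s
    have hst : t ≤ s := by rw [hsdef]; linarith
    have hs_neg : s < 0 := by rw [hsdef]; linarith
    have hρeq : s / t = r / -t := by
      rw [hsdef, neg_div, div_neg]
    have hρpos : 0 < s / t := div_pos_of_neg_of_neg hs_neg ht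
    have hρ1 : s / t ≤ 1 := by
      rw [hρeq, div_le_one hnt]
      exact hrt
    have hch := chord t s hβ0 hρpos hρ1
    rw [← hΔtdef] at hch
    -- (a) : r * (-Δt) ≤ (-t) * (U / 2)
    have ha : r * (-Δt) ≤ (-t) * (U / 2) := by
      have e1 : r * (-Δt) ≤ r * E := by
        apply mul_le_mul_of_nonneg_left _ hr0.le
        rw [hEdef]; linarith
      have e2 : r * E ≤ ((-t) * U / (2 * E)) * E :=
        mul_le_mul_of_nonneg_right hrA hE0.le
      have e3 : ((-t) * U / (2 * E)) * E = (-t) * (U / 2) := by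
        field_simp
      exact le_trans e1 (le_trans e2 (le_of_eq e3))
    -- lower bound for Δs
    have hΔslb : -(U / 2) ≤ (s / t) * Δt := by
      have e1 : (s / t) * Δt = -((r * (-Δt)) / (-t)) := by
        rw [hρeq]
        ring
      rw [e1]
      have h6 : (r * (-Δt)) / (-t) ≤ U / 2 := by
        rw [div_le_iff₀ hnt]
        linarith [ha]
      linarith
    have hys0 : 0 ≤ y j + s := by linarith
    have hΔs0 : v j (y j + s) - v j (y j) ≤ 0 := by
      have := hv.mono j (Set.mem_Ici.mpr hys0) (Set.mem_Ici.mpr hyj) (by linarith)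
      linarith
    have hUs : 0 < U + (v j (y j + s) - v j (y j)) := by
      linarith [hch, hΔslb]
    have hoc := OC s hys0 hUs
    have hqsU : q j * s * U = b * g * s := by rw [hbg]; ring
    have hexp : q j * s * (U + (v j (y j + s) - v j (y j))) =
        b * g * s + q j * s * (v j (y j + s) - v j (y j)) := by
      rw [← hqsU]; ring
    have h1 : b * ((v j (y j + s) - v j (y j)) - g * s) ≤
        q j * s * (v j (y j + s) - v j (y j)) := by linarith [hoc, hexp]
    have hρt : (s / t) * t = s := div_mul_cancel₀ s ht.ne
    have h2 : (s / t) * ε ≤ (v j (y j + s) - v j (y j)) - g * s := by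
      have e : (s / t) * ε = (s / t) * Δt - g * s := by
        calc (s / t) * ε = (s / t) * Δt - g * ((s / t) * t) := by rw [hεdef]; ring
          _ = (s / t) * Δt - g * s := by rw [hρt]
      rw [e]
      linarith [hch]
    -- bound RHS : q j * s * Δs ≤ (s/t) * (b * ε / 2)
    have h3 : q j * s * (v j (y j + s) - v j (y j)) ≤ (s / t) * (b * ε / 2) := by
      have hchs : -(v j (y j + s) - v j (y j)) ≤ (s / t) * (-Δt) := by
        have e : (s / t) * (-Δt) = -((s / t) * Δt) := by ring
        rw [e]
        linarith [hch]
      have e1 : q j * s * (v j (y j + s) - v j (y j)) =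
          q j * r * (-(v j (y j + s) - v j (y j))) := by rw [hsdef]; ring
      have e2 : q j * r * (-(v j (y j + s) - v j (y j))) ≤
          q j * r * ((s / t) * (-Δt)) :=
        mul_le_mul_of_nonneg_left hchs (by positivity)
      have e3 : q j * r * ((s / t) * (-Δt)) = (s / t) * (q j * (r * (-Δt))) := by ring
      have e4 : q j * (r * (-Δt)) ≤ b * ε / 2 := by
        have f1 : r * (-Δt) ≤ r * E := by
          apply mul_le_mul_of_nonneg_left _ hr0.le
          rw [hEdef]; linarith
        have f2 : q j * (r * (-Δt)) ≤ q j * (r * E) :=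
          mul_le_mul_of_nonneg_left f1 hqj
        have f3 : q j * (r * E) ≤ (1 + q j * E) * r := by
          have e : (1 + q j * E) * r - q j * (r * E) = r := by ring
          linarith
        have f4 : (1 + q j * E) * r ≤ (1 + q j * E) * (b * ε / (2 * (1 + q j * E))) :=
          mul_le_mul_of_nonneg_left hrB hqE.le
        have f5 : (1 + q j * E) * (b * ε / (2 * (1 + q j * E))) = b * ε / 2 := by
          field_simp
        linarith
      have e5 : (s / t) * (q j * (r * (-Δt))) ≤ (s / t) * (b * ε / 2) :=
        mul_le_mul_of_nonneg_left e4 hρpos.le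
      linarith
    -- contradiction : b * (s/t) * ε ≤ (s/t) * (b * ε / 2)
    have hfin : b * ((s / t) * ε) ≤ (s / t) * (b * ε / 2) := by
      calc b * ((s / t) * ε) ≤ b * ((v j (y j + s) - v j (y j)) - g * s) :=
            mul_le_mul_of_nonneg_left h2 hb.le
        _ ≤ q j * s * (v j (y j + s) - v j (y j)) := h1
        _ ≤ (s / t) * (b * ε / 2) := h3
    have hpos2 : 0 < (s / t) * b * ε := mul_pos (mul_pos hρpos hb) hεpos
    nlinarith [hfin, hpos2]
  · -- t = 0
    have hβy : β = y j := by rw [← hbt, ht]; ring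
    rw [hβy]
    have e : g * t = 0 := by rw [ht]; ring
    linarith [e]
  · -- increase coordinate j : t > 0
    by_contra hcon
    push_neg at hcon
    rw [← hbt] at hcon
    have hεpos0 : 0 < (v j (y j + t) - v j (y j)) - g * t := by linarith
    set ε := (v j (y j + t) - v j (y j)) - g * t with hεdef
    clear_value ε
    have hεpos : 0 < ε := hεpos0
    have hβ0 : 0 ≤ y j + t := by rw [hbt]; exact hβ
    -- key estimate for all small s
    have key : ∀ s : ℝ, 0 < s → s ≤ t →
        b * ε / t ≤ q j * (v j (y j + s) - v j (y j)) ∧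
        b * Real.log (U + (v j (y j + s) - v j (y j))) - b * Real.log U ≤ q j * s := by
      intro s hs0 hst
      have hmem : 0 ≤ y j + s := by linarith
      have hΔs0 : 0 ≤ v j (y j + s) - v j (y j) := by
        have := hv.mono j (Set.mem_Ici.mpr hyj) (Set.mem_Ici.mpr hmem) (by linarith)
        linarith
      have hpos : 0 < U + (v j (y j + s) - v j (y j)) := by linarith
      have hρpos : 0 < s / t := by positivity
      have hρ1 : s / t ≤ 1 := by rw [div_le_one ht]; exact hst
      have hch := chord t s hβ0 hρpos hρ1
      have hoc := OC s hmem hpos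
      have hqsU : q j * s * U = b * g * s := by rw [hbg]; ring
      have hexp : q j * s * (U + (v j (y j + s) - v j (y j))) =
          b * g * s + q j * s * (v j (y j + s) - v j (y j)) := by
        rw [← hqsU]; ring
      have h1 : b * ((v j (y j + s) - v j (y j)) - g * s) ≤
          q j * s * (v j (y j + s) - v j (y j)) := by linarith [hoc, hexp]
      have hρt : (s / t) * t = s := div_mul_cancel₀ s ht.ne'
      have h2 : (s / t) * ε ≤ (v j (y j + s) - v j (y j)) - g * s := by
        have e : (s / t) * ε = (s / t) * (v j (y j + t) - v j (y j)) - g * s := by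
          calc (s / t) * ε
              = (s / t) * (v j (y j + t) - v j (y j)) - g * ((s / t) * t) := by
                rw [hεdef]; ring
            _ = (s / t) * (v j (y j + t) - v j (y j)) - g * s := by rw [hρt]
        rw [e]
        linarith [hch]
      constructor
      · -- divide b*(s/t)*ε ≤ q j * s * Δs by s
        have h3 : s * (b * ε / t) ≤ s * (q j * (v j (y j + s) - v j (y j))) := by
          have e1 : s * (b * ε / t) = b * ((s / t) * ε) := by
            ring
          have e2 : s * (q j * (v j (y j + s) - v j (y j))) =
              q j * s * (v j (y j + s) - v j (y j)) := by ring
          rw [e1, e2]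
          calc b * ((s / t) * ε) ≤ b * ((v j (y j + s) - v j (y j)) - g * s) :=
                mul_le_mul_of_nonneg_left h2 hb.le
            _ ≤ _ := h1
        exact le_of_mul_le_mul_left h3 hs0
      · exact OClog s hmem hpos
    rcases (eq_or_lt_of_le hqj) with hq | hq
    · -- q j = 0 : contradiction at s = t
      have h := (key t ht le_rfl).1
      rw [← hq] at h
      have h0 : b * ε / t ≤ 0 := by simpa using h
      have hpos : 0 < b * ε / t := by positivity
      linarith
    · -- q j > 0
      set δ := b * ε / (t * q j) with hδdef
      have hδpos : 0 < δ := by rw [hδdef]; positivity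
      clear_value δ
      have hΔδ : ∀ s, 0 < s → s ≤ t → δ ≤ v j (y j + s) - v j (y j) := by
        intro s hs0 hst
        have h := (key s hs0 hst).1
        have e : δ = (b * ε / t) / q j := by rw [hδdef, div_div]
        rw [e, div_le_iff₀ hq]
        linarith [mul_comm (q j) (v j (y j + s) - v j (y j)), h]
      have hc0 : 0 < b * (Real.log (U + δ) - Real.log U) := by
        have h := Real.log_lt_log hU (by linarith : U < U + δ)
        have hd : 0 < Real.log (U + δ) - Real.log U := by linarith
        exact mul_pos hb hd
      set c := b * (Real.log (U + δ) - Real.log U) with hcdef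
      clear_value c
      have hc : 0 < c := hc0
      set s := min t (c / (2 * q j)) with hsdef
      have hs0 : 0 < s := by rw [hsdef]; exact lt_min ht (by positivity)
      have hst : s ≤ t := by rw [hsdef]; exact min_le_left _ _
      have h4 : s ≤ c / (2 * q j) := by rw [hsdef]; exact min_le_right _ _
      clear_value s
      have h1 := (key s hs0 hst).2
      have h2 := hΔδ s hs0 hst
      have h3 : c ≤ b * Real.log (U + (v j (y j + s) - v j (y j))) - b * Real.log U := by
        have hlog := Real.log_le_log (by linarith : (0:ℝ) < U + δ)
          (by linarith : U + δ ≤ U + (v j (y j + s) - v j (y j)))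
        have hm := mul_le_mul_of_nonneg_left hlog hb.le
        rw [hcdef]
        nlinarith [hm]
      have h5 : q j * s ≤ c / 2 := by
        rw [le_div_iff₀ (by positivity : (0:ℝ) < 2 * q j)] at h4
        linarith [h4]
      linarith

set_option maxHeartbeats 1000000 in
/-- KKT characterization of Gale demands for separable utilities: every Gale demand
has positive utility, and `y ∈ G^u(q,b)` iff there are nonnegative supergradients
`g_j ∈ ∂^∧ v_j(y_j)` with `g_j ≤ q_j · u(y)/b`, with equality whenever `y_j > 0`. -/
theorem separable_gale_kkt {M : Type*} [Fintype M]
    (v : M → ℝ → ℝ) (hv : IsSepUtility v) (b : ℝ) (hb : 0 < b)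
    (q : M → ℝ) (hq : q ∈ FsetU (sepU v)) :
    (∀ y ∈ GaleDemand (sepU v) q b, 0 < sepU v y) ∧
    ∀ y : M → ℝ, 0 ≤ y →
      (y ∈ GaleDemand (sepU v) q b ↔
        ∃ g : M → ℝ, ∀ j, IsSupergradient1 (v j) (y j) (g j) ∧ 0 ≤ g j ∧
          g j ≤ q j * sepU v y / b ∧ (0 < y j → g j = q j * sepU v y / b)) := by
  obtain ⟨hq0, -⟩ := hq
  constructor
  · intro y hy; exact hy.2.1
  intro y hy0
  constructor
  · -- forward: optimality ⟹ supergradients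
    intro hy
    have hU : 0 < sepU v y := hy.2.1
    refine ⟨fun j => q j * sepU v y / b, fun j => ?_⟩
    refine ⟨gale_supergrad v hv b hb q hq0 y hy j, ?_, le_refl _, fun _ => rfl⟩
    have hqj : (0:ℝ) ≤ q j := by simpa using hq0 j
    positivity
  · -- backward: supergradients ⟹ optimality
    rintro ⟨g, hg⟩
    have hU0 : 0 ≤ sepU v y := by
      apply Finset.sum_nonneg
      intro j _
      have h := hv.mono j (Set.mem_Ici.mpr le_rfl)
        (Set.mem_Ici.mpr (by simpa using hy0 j)) (by simpa using hy0 j)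
      rw [hv.zero j] at h
      exact h
    have hU : 0 < sepU v y := by
      rcases hU0.lt_or_eq with h | h
      · exact h
      · exfalso
        obtain ⟨x, hx0, hxpos⟩ := hv.exists_pos
        have hgz : ∀ j, g j = 0 := by
          intro j
          have h1 := (hg j).2.1
          have h2 := (hg j).2.2.1
          rw [← h] at h2
          simp at h2
          linarith
        have hle : ∀ j, v j (x j) ≤ v j (y j) := by
          intro j
          have h3 := (hg j).1 (x j) (by simpa using hx0 j)
          rw [hgz j] at h3
          simpa using h3
        have hsum : (∑ j, v j (x j)) ≤ ∑ j, v j (y j) :=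
          Finset.sum_le_sum fun j _ => hle j
        have : sepU v y = ∑ j, v j (y j) := rfl
        linarith
    refine ⟨hy0, hU, ?_⟩
    intro z hz0 hz
    have key : sepU v z - sepU v y ≤ ∑ j, g j * (z j - y j) := by
      have e : sepU v z - sepU v y = ∑ j, (v j (z j) - v j (y j)) := by
        show (∑ j, v j (z j)) - (∑ j, v j (y j)) = _
        rw [← Finset.sum_sub_distrib]
      rw [e]
      apply Finset.sum_le_sum
      intro j _
      have h := (hg j).1 (z j) (by simpa using hz0 j)
      linarith
    have key2 : (∑ j, g j * (z j - y j)) ≤ (sepU v y / b) * (dot q z - dot q y) := by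
      have e : dot q z - dot q y = ∑ j, q j * (z j - y j) := by
        show (∑ j, q j * z j) - (∑ j, q j * y j) = _
        rw [← Finset.sum_sub_distrib]
        exact Finset.sum_congr rfl fun j _ => (mul_sub (q j) (z j) (y j)).symm
      rw [e, Finset.mul_sum]
      apply Finset.sum_le_sum
      intro j _
      rcases (by simpa using hy0 j : (0:ℝ) ≤ y j).lt_or_eq with h | h
      · have heq := (hg j).2.2.2 h
        apply le_of_eq
        rw [heq]
        field_simp
      · have hzj : 0 ≤ z j - y j := by rw [← h]; simpa using hz0 j
        have h1 : g j ≤ sepU v y / b * q j := by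
          calc g j ≤ q j * sepU v y / b := (hg j).2.2.1
            _ = sepU v y / b * q j := by ring
        calc g j * (z j - y j) ≤ (sepU v y / b * q j) * (z j - y j) :=
              mul_le_mul_of_nonneg_right h1 hzj
          _ = sepU v y / b * (q j * (z j - y j)) := by ring
    have hlog := log_le_add (sepU v z) (sepU v y) hz hU
    have hcomb : b * Real.log (sepU v z) - b * Real.log (sepU v y) ≤
        dot q z - dot q y := by
      have h1 : b * Real.log (sepU v z) - b * Real.log (sepU v y) ≤
          b * ((sepU v z - sepU v y) / sepU v y) := by
        have hm := mul_le_mul_of_nonneg_left hlog hb.le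
        have e : b * (Real.log (sepU v y) + (sepU v z - sepU v y) / sepU v y) =
            b * Real.log (sepU v y) + b * ((sepU v z - sepU v y) / sepU v y) := by ring
        linarith [hm, e]
      have h2 : (sepU v z - sepU v y) / sepU v y ≤
          ((sepU v y / b) * (dot q z - dot q y)) / sepU v y :=
        (div_le_div_iff_of_pos_right hU).mpr (key.trans key2)
      have h3 : b * (((sepU v y / b) * (dot q z - dot q y)) / sepU v y) =
          dot q z - dot q y := by
        field_simp [hb.ne', hU.ne']
      have h4 : b * ((sepU v z - sepU v y) / sepU v y) ≤
          b * (((sepU v y / b) * (dot q z - dot q y)) / sepU v y) :=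
        mul_le_mul_of_nonneg_left h2 hb.le
      linarith
    linarith

end
end

section
/- Let u(x) = ∑_{j∈M} v_j(x_j) be a separable utility function on a finite set M of goods, let b > 0, q, q' ∈ F^u with q ≥ q' componentwise, and let y ∈ G^u(q,b) with G^u(q',b) nonempty. Then there exists y' ∈ G^u(q',b) such that y'_j ≤ y_j for every good j with q'_j = q_j. -/
open scoped BigOperators

noncomputable section

namespace GaleAux

variable {M : Type*} [Fintype M] {v : M → ℝ → ℝ}

lemma sepU_mono (hv : IsSepUtility v) {a c : M → ℝ} (ha : 0 ≤ a) (hac : a ≤ c) :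
    sepU v a ≤ sepU v c := by
  unfold sepU
  exact Finset.sum_le_sum fun j _ => hv.mono j (Set.mem_Ici.mpr (ha j))
    (Set.mem_Ici.mpr ((ha j).trans (hac j))) (hac j)

lemma dot_comb (p x w : M → ℝ) (t : ℝ) :
    dot p (fun j => x j + t * (w j - x j)) = dot p x + t * (dot p w - dot p x) := by
  unfold dot
  rw [mul_sub, Finset.mul_sum, Finset.mul_sum, ← Finset.sum_sub_distrib,
    ← Finset.sum_add_distrib]
  exact Finset.sum_congr rfl fun j _ => by ring

lemma sum_coord (v : M → ℝ → ℝ) (lam : ℝ) (p x xx : M → ℝ)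
    (h : ∀ j, lam * v j (xx j) - p j * (xx j) ≤ lam * v j (x j) - p j * (x j)) :
    lam * sepU v xx - dot p xx ≤ lam * sepU v x - dot p x := by
  have h2 := Finset.sum_le_sum fun j (_ : j ∈ Finset.univ) => h j
  rw [Finset.sum_sub_distrib, Finset.sum_sub_distrib, ← Finset.mul_sum, ← Finset.mul_sum] at h2
  exact h2

/-- A Gale optimum maximizes the linearized objective `(b/u(y)) u(x) - ⟨p,x⟩`. -/
lemma gale_linmax (hv : IsSepUtility v) {b : ℝ} (hb : 0 < b) {p y : M → ℝ}
    (hy : y ∈ GaleDemand (sepU v) p b) {w : M → ℝ} (hw : 0 ≤ w) :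
    (b / sepU v y) * sepU v w - dot p w ≤ (b / sepU v y) * sepU v y - dot p y := by
  obtain ⟨hy0, hyU, hopt⟩ := hy
  set U := sepU v y with hUdef
  set A := sepU v w with hAdef
  by_contra hcon
  push_neg at hcon
  set δ : ℝ := ((b / U) * A - dot p w) - ((b / U) * U - dot p y) with hδdef
  have hδ : 0 < δ := by rw [hδdef]; linarith
  set φ : ℝ → ℝ :=
    fun t => b * Real.log (U + t * (A - U)) - (dot p y + t * (dot p w - dot p y)) with hφdef
  have h1 : HasDerivAt (fun t : ℝ => U + t * (A - U)) (A - U) 0 := by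
    simpa using ((hasDerivAt_id (0 : ℝ)).mul_const (A - U)).const_add U
  have h0 : (fun t : ℝ => U + t * (A - U)) 0 = U := by simp
  have hg : HasDerivAt Real.log U⁻¹ ((fun t : ℝ => U + t * (A - U)) 0) := by
    rw [h0]; exact Real.hasDerivAt_log (ne_of_gt hyU)
  have h2 : HasDerivAt (fun t : ℝ => Real.log (U + t * (A - U))) (U⁻¹ * (A - U)) 0 := by
    exact hg.comp 0 h1
  have h3 : HasDerivAt (fun t : ℝ => dot p y + t * (dot p w - dot p y))
      (dot p w - dot p y) 0 := by
    simpa using ((hasDerivAt_id (0 : ℝ)).mul_const (dot p w - dot p y)).const_add (dot p y)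
  have hder : HasDerivAt φ δ 0 := by
    have := (h2.const_mul b).sub h3
    convert this using 1
    · rfl
    · rfl
    · rfl
    rw [hδdef]
    field_simp
    ring
  have hex : ∃ t : ℝ, 0 < t ∧ t < 1 ∧ 0 < U + t * (A - U) ∧ φ 0 < φ t := by
    have hslope := hasDerivAt_iff_tendsto_slope.mp hder
    have hmono : nhdsWithin (0 : ℝ) (Set.Ioi 0) ≤ nhdsWithin (0 : ℝ) {(0 : ℝ)}ᶜ :=
      nhdsWithin_mono 0 fun x hx => Set.mem_compl_singleton_iff.mpr (ne_of_gt hx)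
    have e1 : ∀ᶠ t in nhdsWithin (0 : ℝ) (Set.Ioi 0), 0 < slope φ 0 t :=
      ((hslope.eventually (lt_mem_nhds hδ)).filter_mono hmono)
    have hc : Filter.Tendsto (fun t : ℝ => U + t * (A - U)) (nhds 0) (nhds U) := by
      have hcont : Continuous fun t : ℝ => U + t * (A - U) := by continuity
      simpa using hcont.tendsto 0
    have e2 : ∀ᶠ t in nhdsWithin (0 : ℝ) (Set.Ioi 0), 0 < U + t * (A - U) :=
      (hc.eventually (lt_mem_nhds hyU)).filter_mono nhdsWithin_le_nhds
    have e3 : ∀ᶠ t in nhdsWithin (0 : ℝ) (Set.Ioi 0), t < 1 :=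
      (gt_mem_nhds (by norm_num : (0 : ℝ) < 1)).filter_mono nhdsWithin_le_nhds
    have e4 : ∀ᶠ t in nhdsWithin (0 : ℝ) (Set.Ioi 0), 0 < t := eventually_mem_nhdsWithin
    obtain ⟨t, ⟨⟨⟨hs, hu⟩, h1t⟩, htp⟩⟩ := (((e1.and e2).and e3).and e4).exists
    refine ⟨t, htp, h1t, hu, ?_⟩
    rw [slope_def_field] at hs
    have := mul_pos hs htp
    rw [sub_zero, div_mul_cancel₀ _ (ne_of_gt htp)] at this
    linarith
  obtain ⟨t, ht0, ht1, htU, hφt⟩ := hex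
  set x : M → ℝ := fun j => y j + t * (w j - y j) with hxdef
  have hx0 : 0 ≤ x := fun j => by
    have heq : x j = (1 - t) * y j + t * w j := by rw [hxdef]; ring
    rw [heq]
    exact add_nonneg (mul_nonneg (by linarith) (hy0 j)) (mul_nonneg ht0.le (hw j))
  have hxu : U + t * (A - U) ≤ sepU v x := by
    have hj : ∀ j ∈ Finset.univ, (1 - t) * v j (y j) + t * v j (w j) ≤ v j (x j) := by
      intro j _
      have hcc := (hv.concave j).2 (Set.mem_Ici.mpr (hy0 j)) (Set.mem_Ici.mpr (hw j))
        (by linarith : (0 : ℝ) ≤ 1 - t) ht0.le (by ring)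
      have harg : (1 - t) • y j + t • w j = x j := by
        rw [hxdef]; simp only [smul_eq_mul]; ring
      rw [harg] at hcc
      simpa [smul_eq_mul] using hcc
    have hsum := Finset.sum_le_sum hj
    have hL : ∑ j, ((1 - t) * v j (y j) + t * v j (w j)) = (1 - t) * U + t * A := by
      rw [Finset.sum_add_distrib, ← Finset.mul_sum, ← Finset.mul_sum, hUdef, hAdef]
      rfl
    rw [hL] at hsum
    have : (1 - t) * U + t * A = U + t * (A - U) := by ring
    rw [this] at hsum
    exact hsum
  have hxpos : 0 < sepU v x := lt_of_lt_of_le htU hxu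
  have hg2 := hopt x hx0 hxpos
  have hdot : dot p x = dot p y + t * (dot p w - dot p y) := dot_comb p y w t
  have hlog : b * Real.log (U + t * (A - U)) ≤ b * Real.log (sepU v x) :=
    mul_le_mul_of_nonneg_left (Real.log_le_log htU hxu) hb.le
  have hφ0 : φ 0 = b * Real.log U - dot p y := by rw [hφdef]; simp
  have hφtv : φ t = b * Real.log (U + t * (A - U)) - (dot p y + t * (dot p w - dot p y)) := rfl
  rw [hφ0, hφtv] at hφt
  rw [hdot] at hg2
  linarith

/-- Coordinate-wise first-order optimality of a Gale optimum. -/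
lemma gale_coord (hv : IsSepUtility v) {b : ℝ} (hb : 0 < b) {p x : M → ℝ}
    (hx : x ∈ GaleDemand (sepU v) p b) (j : M) (t : ℝ) (ht : 0 ≤ t) :
    (b / sepU v x) * v j t - p j * t ≤ (b / sepU v x) * v j (x j) - p j * (x j) := by
  classical
  have hx0 : 0 ≤ x := hx.1
  have hupd0 : 0 ≤ Function.update x j t := fun i => by
    rcases eq_or_ne i j with rfl | h
    · simpa using ht
    · simpa [Function.update_of_ne h] using hx0 i
  have hlin := gale_linmax hv hb hx hupd0
  have hs : sepU v (Function.update x j t) - sepU v x = v j t - v j (x j) := by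
    unfold sepU
    rw [← Finset.sum_sub_distrib, Finset.sum_eq_single j]
    · simp
    · intro i _ hij; simp [Function.update_of_ne hij]
    · intro h; exact absurd (Finset.mem_univ j) h
  have hd : dot p (Function.update x j t) - dot p x = p j * t - p j * (x j) := by
    unfold dot
    rw [← Finset.sum_sub_distrib, Finset.sum_eq_single j]
    · simp
    · intro i _ hij; simp [Function.update_of_ne hij]
    · intro h; exact absurd (Finset.mem_univ j) h
  have e1 : sepU v (Function.update x j t) = sepU v x + (v j t - v j (x j)) := by linarith
  have e2 : dot p (Function.update x j t) = dot p x + (p j * t - p j * (x j)) := by linarith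
  rw [e1, e2, mul_add] at hlin
  linarith

/-- Coordinate-wise optimality at level `b/u(x)` implies Gale optimality. -/
lemma coord_gale (hv : IsSepUtility v) {b : ℝ} (hb : 0 < b) {p x : M → ℝ}
    (hx : 0 ≤ x) (hpos : 0 < sepU v x) {lam : ℝ} (hlam : lam = b / sepU v x)
    (hco : ∀ j (t : ℝ), 0 ≤ t → lam * v j t - p j * t ≤ lam * v j (x j) - p j * (x j)) :
    x ∈ GaleDemand (sepU v) p b := by
  refine ⟨hx, hpos, ?_⟩
  intro w hw hwpos
  have hsum : lam * sepU v w - dot p w ≤ lam * sepU v x - dot p x :=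
    sum_coord v lam p x w fun j => hco j (w j) (hw j)
  have h1 : Real.log (sepU v w / sepU v x) ≤ sepU v w / sepU v x - 1 :=
    Real.log_le_sub_one_of_pos (div_pos hwpos hpos)
  rw [Real.log_div (ne_of_gt hwpos) (ne_of_gt hpos)] at h1
  have h2 : b * (Real.log (sepU v w) - Real.log (sepU v x)) ≤
      b * (sepU v w / sepU v x - 1) := mul_le_mul_of_nonneg_left h1 hb.le
  have h3 : b * (sepU v w / sepU v x - 1) = lam * sepU v w - lam * sepU v x := by
    rw [hlam]; field_simp
  have h4 : lam * sepU v x = b := by rw [hlam]; field_simp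
  rw [mul_sub] at h2
  rw [h3] at h2
  linarith

/-- Build a Gale optimum as a convex combination of two linearized optima whose
utilities bracket the common optimal utility. -/
lemma build (hv : IsSepUtility v) {b : ℝ} (hb : 0 < b) {q' z : M → ℝ}
    (hz : z ∈ GaleDemand (sepU v) q' b) (c w : M → ℝ) (hc0 : 0 ≤ c) (hw0 : 0 ≤ w)
    (hcm : ∀ j (t : ℝ), 0 ≤ t →
      (b / sepU v z) * v j t - q' j * t ≤ (b / sepU v z) * v j (c j) - q' j * c j)
    (hwm : ∀ j (t : ℝ), 0 ≤ t →
      (b / sepU v z) * v j t - q' j * t ≤ (b / sepU v z) * v j (w j) - q' j * w j)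
    (hca : sepU v c ≤ sepU v z) (hwa : sepU v z ≤ sepU v w) :
    ∃ θ : ℝ, 0 ≤ θ ∧ θ ≤ 1 ∧
      (fun j => (1 - θ) * c j + θ * w j) ∈ GaleDemand (sepU v) q' b := by
  have hz0 : 0 ≤ z := hz.1
  have hzU : 0 < sepU v z := hz.2.1
  have hzc := fun j t ht => gale_coord hv hb hz j t ht
  set lam := b / sepU v z with hlam
  have hlampos : 0 < lam := div_pos hb hzU
  obtain ⟨θ, hθ0, hθ1, hθU⟩ : ∃ θ : ℝ, 0 ≤ θ ∧ θ ≤ 1 ∧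
      (1 - θ) * sepU v c + θ * sepU v w = sepU v z := by
    rcases lt_or_ge (sepU v c) (sepU v w) with hlt | hge
    · refine ⟨(sepU v z - sepU v c) / (sepU v w - sepU v c),
        div_nonneg (by linarith) (by linarith), ?_, ?_⟩
      · rw [div_le_one (by linarith)]; linarith
      · have hne0 : sepU v w - sepU v c ≠ 0 := sub_ne_zero.mpr (ne_of_gt hlt)
        field_simp
        ring
    · exact ⟨0, le_rfl, zero_le_one, by simp; linarith⟩
  have hy'0 : 0 ≤ fun j => (1 - θ) * c j + θ * w j := fun j =>
    add_nonneg (mul_nonneg (by linarith) (hc0 j)) (mul_nonneg hθ0 (hw0 j))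
  have hcv : ∀ j, lam * v j (c j) - q' j * c j = lam * v j (z j) - q' j * z j := fun j =>
    le_antisymm (hzc j (c j) (hc0 j)) (hcm j (z j) (hz0 j))
  have hwv : ∀ j, lam * v j (w j) - q' j * w j = lam * v j (z j) - q' j * z j := fun j =>
    le_antisymm (hzc j (w j) (hw0 j)) (hwm j (z j) (hz0 j))
  have hconc : ∀ j, (1 - θ) * v j (c j) + θ * v j (w j) ≤ v j ((1 - θ) * c j + θ * w j) := by
    intro j
    have hcc := (hv.concave j).2 (Set.mem_Ici.mpr (hc0 j)) (Set.mem_Ici.mpr (hw0 j))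
      (by linarith : (0 : ℝ) ≤ 1 - θ) hθ0 (by ring)
    simpa [smul_eq_mul] using hcc
  have hy'ge : ∀ j, lam * v j (z j) - q' j * z j ≤
      lam * v j ((1 - θ) * c j + θ * w j) - q' j * ((1 - θ) * c j + θ * w j) := by
    intro j
    have h2 := mul_le_mul_of_nonneg_left (hconc j) hlampos.le
    have E1 : (1 - θ) * (lam * v j (c j) - q' j * c j) + θ * (lam * v j (w j) - q' j * w j)
        = lam * v j (z j) - q' j * z j := by
      linear_combination (1 - θ) * (hcv j) + θ * (hwv j)
    nlinarith [h2, E1]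
  have hy'le : ∀ j, lam * v j ((1 - θ) * c j + θ * w j) - q' j * ((1 - θ) * c j + θ * w j) ≤
      lam * v j (z j) - q' j * z j := fun j => hzc j _ (hy'0 j)
  have hveq : ∀ j, v j ((1 - θ) * c j + θ * w j) = (1 - θ) * v j (c j) + θ * v j (w j) := by
    intro j
    have heq := le_antisymm (hy'le j) (hy'ge j)
    have E1 : (1 - θ) * (lam * v j (c j) - q' j * c j) + θ * (lam * v j (w j) - q' j * w j)
        = lam * v j (z j) - q' j * z j := by
      linear_combination (1 - θ) * (hcv j) + θ * (hwv j)
    have hl : lam * v j ((1 - θ) * c j + θ * w j) =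
        lam * ((1 - θ) * v j (c j) + θ * v j (w j)) := by
      linear_combination heq - E1
    exact mul_left_cancel₀ (ne_of_gt hlampos) hl
  have hu' : sepU v (fun j => (1 - θ) * c j + θ * w j) = sepU v z := by
    unfold sepU
    rw [Finset.sum_congr rfl fun j _ => hveq j, Finset.sum_add_distrib,
      ← Finset.mul_sum, ← Finset.mul_sum]
    have h5 := hθU
    unfold sepU at h5
    linarith
  refine ⟨θ, hθ0, hθ1, ?_⟩
  refine coord_gale hv hb hy'0 (by rw [hu']; exact hzU) (lam := lam) (by rw [hu', hlam]) ?_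
  intro j t ht
  exact (hzc j t ht).trans (hy'ge j)

end GaleAux

open GaleAux

/-- Separable utilities satisfy the first Gale-substitutes property: when prices
decrease from `q` to `q'`, some Gale demand at `q'` does not exceed the Gale demand
at `q` on goods whose price is unchanged. -/
theorem separable_gale_substitutes_prices {M : Type*} [Fintype M]
    (v : M → ℝ → ℝ) (hv : IsSepUtility v) (b : ℝ) (hb : 0 < b)
    (q q' : M → ℝ) (hq : q ∈ FsetU (sepU v)) (hq' : q' ∈ FsetU (sepU v))
    (hle : q' ≤ q)
    (y : M → ℝ) (hy : y ∈ GaleDemand (sepU v) q b)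
    (hne : (GaleDemand (sepU v) q' b).Nonempty) :
    ∃ y' ∈ GaleDemand (sepU v) q' b, ∀ j, q' j = q j → y' j ≤ y j := by
  classical
  obtain ⟨z, hz⟩ := hne
  have hy0 : 0 ≤ y := hy.1
  have hyU : 0 < sepU v y := hy.2.1
  have hz0 : 0 ≤ z := hz.1
  have hzU : 0 < sepU v z := hz.2.1
  have hyc := fun j t ht => gale_coord hv hb hy j t ht
  have hzc := fun j t ht => gale_coord hv hb hz j t ht
  -- Step 1: the optimal utility cannot decrease when prices drop
  have hUle : sepU v y ≤ sepU v z := by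
    by_contra hcon
    push_neg at hcon
    set m : M → ℝ := fun j => min (y j) (z j) with hm
    set w : M → ℝ := fun j => max (y j) (z j) with hw
    have hm0 : 0 ≤ m := fun j => le_min (hy0 j) (hz0 j)
    have hw0 : 0 ≤ w := fun j => (hy0 j).trans (le_max_left _ _)
    have h1 : (b / sepU v y) * sepU v m - dot q m ≤ (b / sepU v y) * sepU v y - dot q y :=
      sum_coord v _ q y m fun j => hyc j (m j) (hm0 j)
    have h2 : (b / sepU v z) * sepU v w - dot q' w ≤ (b / sepU v z) * sepU v z - dot q' z :=
      sum_coord v _ q' z w fun j => hzc j (w j) (hw0 j)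
    have hsum : sepU v m + sepU v w = sepU v y + sepU v z := by
      unfold sepU
      rw [← Finset.sum_add_distrib, ← Finset.sum_add_distrib]
      refine Finset.sum_congr rfl fun j _ => ?_
      rcases le_total (y j) (z j) with h | h
      · rw [hm, hw]; simp only [min_eq_left h, max_eq_right h]
      · rw [hm, hw]; simp only [min_eq_right h, max_eq_left h]; ring
    have hdm : dot q y - dot q m = ∑ j, q j * (y j - m j) := by
      unfold dot
      rw [← Finset.sum_sub_distrib]
      exact Finset.sum_congr rfl fun j _ => by ring
    have hdw : dot q' w - dot q' z = ∑ j, q' j * (y j - m j) := by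
      unfold dot
      rw [← Finset.sum_sub_distrib]
      refine Finset.sum_congr rfl fun j _ => ?_
      have hwz : w j - z j = y j - m j := by
        rcases le_total (y j) (z j) with h | h
        · rw [hm, hw]; simp only [min_eq_left h, max_eq_right h]; ring
        · rw [hm, hw]; simp only [min_eq_right h, max_eq_left h]
      rw [← mul_sub, hwz]
    have hEle : ∑ j, q' j * (y j - m j) ≤ ∑ j, q j * (y j - m j) :=
      Finset.sum_le_sum fun j _ => mul_le_mul_of_nonneg_right (hle j)
        (sub_nonneg.mpr (min_le_left _ _))
    have humw : sepU v y ≤ sepU v w := sepU_mono hv hy0 fun j => le_max_left _ _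
    have hD : 0 < sepU v w - sepU v z := by linarith
    have hlamlt : b / sepU v y < b / sepU v z := div_lt_div_of_pos_left hb hzU hcon
    have hkey := mul_lt_mul_of_pos_right hlamlt hD
    have hsum' : (b / sepU v y) * (sepU v m + sepU v w)
        = (b / sepU v y) * (sepU v y + sepU v z) := by rw [hsum]
    nlinarith [h1, h2, hdm, hdw, hEle, hkey, hsum']
  rcases eq_or_lt_of_le hUle with heq | hlt
  · -- equal utilities: interpolate between the min and the `y`-selection
    have hF : ∀ j, q' j ≠ q j → y j ≤ z j := by
      intro j hne'
      by_contra hcon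
      push_neg at hcon
      have hA := hyc j (z j) (hz0 j)
      have hB := hzc j (y j) (hy0 j)
      rw [← heq] at hB
      have he : 0 < y j - z j := by linarith
      have h1 : q j * (y j - z j) ≤ q' j * (y j - z j) := by nlinarith [hA, hB]
      have h2 : q' j * (y j - z j) ≤ q j * (y j - z j) :=
        mul_le_mul_of_nonneg_right (hle j) he.le
      exact hne' (mul_right_cancel₀ (ne_of_gt he) (le_antisymm h2 h1))
    set c : M → ℝ := fun j => if q' j = q j then min (y j) (z j) else z j with hc
    set w : M → ℝ := fun j => if q' j = q j then y j else z j with hw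
    have hc0 : 0 ≤ c := fun j => by
      by_cases h : q' j = q j
      · rw [hc]; simp only [if_pos h]; exact le_min (hy0 j) (hz0 j)
      · rw [hc]; simp only [if_neg h]; exact hz0 j
    have hw0 : 0 ≤ w := fun j => by
      by_cases h : q' j = q j
      · rw [hw]; simp only [if_pos h]; exact hy0 j
      · rw [hw]; simp only [if_neg h]; exact hz0 j
    have hcm : ∀ j (t : ℝ), 0 ≤ t →
        (b / sepU v z) * v j t - q' j * t ≤ (b / sepU v z) * v j (c j) - q' j * c j := by
      intro j t ht
      by_cases h : q' j = q j
      · rw [hc]; simp only [if_pos h]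
        rcases le_total (z j) (y j) with hh | hh
        · rw [min_eq_right hh]; exact hzc j t ht
        · rw [min_eq_left hh, h, ← heq]; exact hyc j t ht
      · rw [hc]; simp only [if_neg h]; exact hzc j t ht
    have hwm : ∀ j (t : ℝ), 0 ≤ t →
        (b / sepU v z) * v j t - q' j * t ≤ (b / sepU v z) * v j (w j) - q' j * w j := by
      intro j t ht
      by_cases h : q' j = q j
      · rw [hw]; simp only [if_pos h]; rw [h, ← heq]; exact hyc j t ht
      · rw [hw]; simp only [if_neg h]; exact hzc j t ht
    have hca : sepU v c ≤ sepU v z := by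
      refine sepU_mono hv hc0 fun j => ?_
      by_cases h : q' j = q j
      · rw [hc]; simp only [if_pos h]; exact min_le_right _ _
      · rw [hc]; simp only [if_neg h]; exact le_rfl
    have hwa : sepU v z ≤ sepU v w := by
      rw [← heq]
      refine sepU_mono hv hy0 fun j => ?_
      by_cases h : q' j = q j
      · rw [hw]; simp only [if_pos h]; exact le_rfl
      · rw [hw]; simp only [if_neg h]; exact hF j h
    obtain ⟨θ, hθ0, hθ1, hmem⟩ := build hv hb hz c w hc0 hw0 hcm hwm hca hwa
    refine ⟨_, hmem, ?_⟩
    intro j hqq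
    show (1 - θ) * c j + θ * w j ≤ y j
    have hcj : c j ≤ y j := by rw [hc]; simp only [if_pos hqq]; exact min_le_left _ _
    have hwj : w j = y j := by rw [hw]; simp only [if_pos hqq]
    nlinarith [mul_le_mul_of_nonneg_left hcj (by linarith : (0 : ℝ) ≤ 1 - θ)]
  · -- strictly larger utility at the lower prices
    have hlamlt : b / sepU v z < b / sepU v y := div_lt_div_of_pos_left hb hyU hlt
    have hkey : ∀ j, q' j = q j → y j ≤ z j →
        v j (y j) = v j (z j) ∧
        (b / sepU v z) * v j (y j) - q' j * y j = (b / sepU v z) * v j (z j) - q' j * z j := by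
      intro j hqq hyz
      have hA := hyc j (z j) (hz0 j)
      have hB := hzc j (y j) (hy0 j)
      rw [hqq] at hB
      have hmj : v j (y j) ≤ v j (z j) :=
        hv.mono j (Set.mem_Ici.mpr (hy0 j)) (Set.mem_Ici.mpr (hz0 j)) hyz
      have h1 : (b / sepU v y) * (v j (z j) - v j (y j)) ≤ q j * (z j - y j) := by
        nlinarith [hA]
      have h2 : q j * (z j - y j) ≤ (b / sepU v z) * (v j (z j) - v j (y j)) := by
        nlinarith [hB]
      have h3 : (b / sepU v z) * (v j (z j) - v j (y j)) ≤
          (b / sepU v y) * (v j (z j) - v j (y j)) :=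
        mul_le_mul_of_nonneg_right hlamlt.le (by linarith)
      have hd0 : v j (z j) - v j (y j) ≤ 0 := by
        by_contra hcc
        push_neg at hcc
        have := mul_lt_mul_of_pos_right hlamlt hcc
        linarith
      have hd : v j (y j) = v j (z j) := le_antisymm hmj (by linarith)
      refine ⟨hd, ?_⟩
      rw [hqq]
      nlinarith [h1, h2, hd]
    set c : M → ℝ := fun j => if q' j = q j then min (y j) (z j) else z j with hc
    have hc0 : 0 ≤ c := fun j => by
      by_cases h : q' j = q j
      · rw [hc]; simp only [if_pos h]; exact le_min (hy0 j) (hz0 j)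
      · rw [hc]; simp only [if_neg h]; exact hz0 j
    have hcm : ∀ j (t : ℝ), 0 ≤ t →
        (b / sepU v z) * v j t - q' j * t ≤ (b / sepU v z) * v j (c j) - q' j * c j := by
      intro j t ht
      by_cases h : q' j = q j
      · rw [hc]; simp only [if_pos h]
        rcases le_total (z j) (y j) with hh | hh
        · rw [min_eq_right hh]; exact hzc j t ht
        · rw [min_eq_left hh]
          exact (hzc j t ht).trans (le_of_eq (hkey j h hh).2.symm)
      · rw [hc]; simp only [if_neg h]; exact hzc j t ht
    have hceq : sepU v c = sepU v z := by
      unfold sepU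
      refine Finset.sum_congr rfl fun j _ => ?_
      by_cases h : q' j = q j
      · rcases le_total (z j) (y j) with hh | hh
        · rw [hc]; simp only [if_pos h, min_eq_right hh]
        · rw [hc]; simp only [if_pos h, min_eq_left hh]; exact (hkey j h hh).1
      · rw [hc]; simp only [if_neg h]
    obtain ⟨θ, hθ0, hθ1, hmem⟩ := build hv hb hz c c hc0 hc0 hcm hcm hceq.le hceq.symm.le
    refine ⟨_, hmem, ?_⟩
    intro j hqq
    show (1 - θ) * c j + θ * c j ≤ y j
    have hcj : c j ≤ y j := by rw [hc]; simp only [if_pos hqq]; exact min_le_left _ _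
    nlinarith [hcj]

end
end

section
/- Let u(x) = ∑_{j∈M} v_j(x_j) be a separable utility function on a finite set M of goods, let b > b' > 0 and q ∈ F^u, and let y ∈ G^u(q,b) with G^u(q,b') nonempty. Then there exists y' ∈ G^u(q,b') such that y' ≤ y componentwise. -/
open scoped BigOperators

noncomputable section

section Aux

variable {M : Type*} [Fintype M]

lemma IsSepUtility.v_nonneg {v : M → ℝ → ℝ} (hv : IsSepUtility v) (j : M) {x : ℝ}
    (hx : 0 ≤ x) : 0 ≤ v j x := by
  have := hv.mono j Set.self_mem_Ici (Set.mem_Ici.mpr hx) hx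
  rwa [hv.zero j] at this

lemma sepU_nonneg {v : M → ℝ → ℝ} (hv : IsSepUtility v) {x : M → ℝ} (hx : 0 ≤ x) :
    0 ≤ sepU v x :=
  Finset.sum_nonneg fun j _ => hv.v_nonneg j (hx j)

lemma sepU_mono {v : M → ℝ → ℝ} (hv : IsSepUtility v) {x y : M → ℝ} (hx : 0 ≤ x)
    (hxy : x ≤ y) : sepU v x ≤ sepU v y :=
  Finset.sum_le_sum fun j _ => hv.mono j (Set.mem_Ici.mpr (hx j))
    (Set.mem_Ici.mpr ((hx j).trans (hxy j))) (hxy j)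

lemma sum_update_eq [DecidableEq M] (f : M → ℝ → ℝ) (y : M → ℝ) (j : M) (a : ℝ) :
    ∑ i, f i (Function.update y j a i) = (∑ i, f i (y i)) - f j (y j) + f j a := by
  have h : (fun i => f i (Function.update y j a i))
      = Function.update (fun i => f i (y i)) j (f j a) := by
    funext i
    by_cases h : i = j
    · subst h; simp
    · simp [Function.update_of_ne h]
  rw [h, Finset.sum_update_of_mem (Finset.mem_univ j),
    ← Finset.add_sum_erase _ _ (Finset.mem_univ j), Finset.erase_eq]
  ring

/-- Sufficiency: coordinatewise optimality implies Gale demand membership. -/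
lemma mem_gale_of_coord {v : M → ℝ → ℝ} (hv : IsSepUtility v) {q : M → ℝ} {β : ℝ}
    (hβ : 0 < β) {y : M → ℝ} (hy0 : 0 ≤ y) {A : ℝ} (hA : sepU v y = A) (hApos : 0 < A)
    (hopt : ∀ j, ∀ x : ℝ, 0 ≤ x →
      β / A * v j x - q j * x ≤ β / A * v j (y j) - q j * y j) :
    y ∈ GaleDemand (sepU v) q β := by
  refine ⟨hy0, by rw [hA]; exact hApos, ?_⟩
  intro z hz0 hz
  have h1 : Real.log (sepU v z) - Real.log A ≤ sepU v z / A - 1 := by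
    have := Real.log_le_sub_one_of_pos (x := sepU v z / A) (by positivity)
    rwa [Real.log_div hz.ne' hApos.ne'] at this
  have h1' : β * Real.log (sepU v z) ≤ β * Real.log A + β / A * sepU v z - β := by
    have := mul_le_mul_of_nonneg_left h1 hβ.le
    have hr : β * (sepU v z / A - 1) = β / A * sepU v z - β := by ring
    nlinarith [this]
  have h2 : ∀ x : M → ℝ, ∑ j, (β / A * v j (x j) - q j * x j)
      = β / A * sepU v x - dot q x := by
    intro x
    simp [sepU, dot, Finset.sum_sub_distrib, Finset.mul_sum]
  have h3 : β / A * sepU v z - dot q z ≤ β / A * sepU v y - dot q y := by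
    rw [← h2, ← h2]
    exact Finset.sum_le_sum fun j _ => hopt j (z j) (hz0 j)
  have h4 : β / A * sepU v y = β := by
    rw [hA]; field_simp
  rw [hA]
  linarith [h1', h3, h4]

/-- Necessity: Gale demand membership implies coordinatewise optimality. -/
lemma coord_of_mem_gale {v : M → ℝ → ℝ} (hv : IsSepUtility v) {q : M → ℝ} {β : ℝ}
    (hβ : 0 < β) {y : M → ℝ} (hy : y ∈ GaleDemand (sepU v) q β) (j : M) (x : ℝ)
    (hx : 0 ≤ x) :
    β / sepU v y * v j x - q j * x ≤ β / sepU v y * v j (y j) - q j * y j := by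
  classical
  obtain ⟨hy0, hA, hopt⟩ := hy
  set A := sepU v y with hAdef
  set δ := v j x - v j (y j) with hδ
  set r := q j * (x - y j) with hr
  have hvyj_le : v j (y j) ≤ A := by
    rw [hAdef]
    exact Finset.single_le_sum (f := fun i => v i (y i))
      (fun i _ => hv.v_nonneg i (hy0 i)) (Finset.mem_univ j)
  have hvx0 : 0 ≤ v j x := hv.v_nonneg j hx
  have key : ∀ ε : ℝ, ε ∈ Set.Ioo (0:ℝ) 1 →
      β * Real.log (A + ε * δ) - β * Real.log A ≤ ε * r := by
    rintro ε ⟨hε0, hε1⟩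
    set a : ℝ := (1 - ε) * y j + ε * x with ha
    have ha0 : 0 ≤ a :=
      add_nonneg (mul_nonneg (by linarith) (hy0 j)) (mul_nonneg hε0.le hx)
    set z := Function.update y j a with hz
    have hz0 : (0 : M → ℝ) ≤ z := by
      intro i
      by_cases h : i = j
      · subst h; simpa [hz] using ha0
      · simpa [hz, Function.update_of_ne h] using hy0 i
    have hconc := (hv.concave j).2 (Set.mem_Ici.mpr (hy0 j)) (Set.mem_Ici.mpr hx)
      (by linarith : (0:ℝ) ≤ 1 - ε) hε0.le (by ring)
    have hva : v j (y j) + ε * δ ≤ v j a := by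
      have : (1 - ε) * v j (y j) + ε * v j x ≤ v j ((1 - ε) * y j + ε * x) := by
        simpa [smul_eq_mul] using hconc
      rw [ha, hδ]; nlinarith [this]
    have hsz : sepU v z = A - v j (y j) + v j a := by
      rw [hz, hAdef]
      exact sum_update_eq v y j a
    have huz : A + ε * δ ≤ sepU v z := by rw [hsz]; linarith
    have hpos : 0 < A + ε * δ := by
      have h1 : -v j (y j) ≤ δ := by rw [hδ]; linarith
      nlinarith [mul_le_mul_of_nonneg_left h1 hε0.le, hvyj_le, hA]
    have huzpos : 0 < sepU v z := lt_of_lt_of_le hpos huz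
    have hopt' := hopt z hz0 huzpos
    have hdz : dot q z = dot q y + ε * r := by
      have : dot q z = dot q y - q j * y j + q j * a := by
        rw [hz]
        exact sum_update_eq (fun i t => q i * t) y j a
      rw [this, ha, hr]; ring
    have hlog : Real.log (A + ε * δ) ≤ Real.log (sepU v z) :=
      Real.log_le_log hpos huz
    have := mul_le_mul_of_nonneg_left hlog hβ.le
    rw [hdz] at hopt'
    linarith
  have hA0 : A ≠ 0 := hA.ne'
  have hderiv : HasDerivAt (fun ε : ℝ => β * Real.log (A + ε * δ)) (β * (A⁻¹ * δ)) 0 := by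
    have h1 : HasDerivAt (fun ε : ℝ => A + ε * δ) δ 0 := by
      simpa using ((hasDerivAt_id (0:ℝ)).mul_const δ).const_add A
    have h2 : HasDerivAt Real.log A⁻¹ ((fun ε : ℝ => A + ε * δ) 0) := by
      simpa using Real.hasDerivAt_log hA0
    exact (h2.comp 0 h1).const_mul β
  have hslope : Filter.Tendsto (slope (fun ε : ℝ => β * Real.log (A + ε * δ)) 0)
      (nhdsWithin 0 (Set.Ioi 0)) (nhds (β * (A⁻¹ * δ))) := by
    have := hasDerivAt_iff_tendsto_slope.mp hderiv
    exact this.mono_left (nhdsWithin_mono 0 (fun x hx => Set.mem_compl_singleton_iff.mpr (ne_of_gt hx)))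
  have hlim : β * (A⁻¹ * δ) ≤ r := by
    refine le_of_tendsto hslope ?_
    filter_upwards [Ioo_mem_nhdsGT_of_mem (by simp : (0:ℝ) ∈ Set.Ico (0:ℝ) 1)] with ε hε
    have hε0 : 0 < ε := hε.1
    rw [slope_def_field]
    rw [div_le_iff₀ (by simpa using hε0)]
    have := key ε hε
    simp only [sub_zero]
    calc β * Real.log (A + ε * δ) - β * Real.log (A + 0 * δ)
        = β * Real.log (A + ε * δ) - β * Real.log A := by norm_num
      _ ≤ ε * r := key ε hε
      _ = r * ε := by ring
  have hexp : β / A * v j x - β / A * v j (y j) = β * (A⁻¹ * δ) := by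
    rw [hδ]; ring
  have hrr : r = q j * x - q j * y j := by rw [hr]; ring
  linarith [hlim, hexp, hrr]

end Aux

/-- Separable utilities satisfy the second Gale-substitutes property: when the
budget decreases from `b` to `b'`, some Gale demand at `b'` does not exceed the
Gale demand at `b`. -/
theorem separable_gale_substitutes_budget {M : Type*} [Fintype M]
    (v : M → ℝ → ℝ) (hv : IsSepUtility v) (b b' : ℝ) (hb' : 0 < b') (hbb : b' < b)
    (q : M → ℝ) (hq : q ∈ FsetU (sepU v))
    (y : M → ℝ) (hy : y ∈ GaleDemand (sepU v) q b)
    (hne : (GaleDemand (sepU v) q b').Nonempty) :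
    ∃ y' ∈ GaleDemand (sepU v) q b', y' ≤ y := by
  classical
  obtain ⟨w, hw⟩ := hne
  have hb : 0 < b := hb'.trans hbb
  have hy0 : (0 : M → ℝ) ≤ y := hy.1
  have hA : 0 < sepU v y := hy.2.1
  have hw0 : (0 : M → ℝ) ≤ w := hw.1
  have hB : 0 < sepU v w := hw.2.1
  have hq0 : (0 : M → ℝ) ≤ q := hq.1
  have hyc := coord_of_mem_gale hv hb hy
  have hwc := coord_of_mem_gale hv hb' hw
  set A := sepU v y with hAdef
  set B := sepU v w with hBdef
  set P := b / A with hP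
  set Q := b' / B with hQ
  have hPpos : 0 < P := div_pos hb hA
  have hQpos : 0 < Q := div_pos hb' hB
  have hPA : P * A = b := div_mul_cancel₀ b hA.ne'
  have hQB : Q * B = b' := div_mul_cancel₀ b' hB.ne'
  have hsumform : ∀ (c : ℝ) (z : M → ℝ), ∑ j, (c * v j (z j) - q j * z j)
      = c * sepU v z - dot q z := by
    intro c z
    simp [sepU, dot, Finset.sum_sub_distrib, Finset.mul_sum]
  have hsum1 : P * B - dot q w ≤ P * A - dot q y := by
    rw [← hsumform, ← hsumform]
    exact Finset.sum_le_sum fun j _ => hyc j (w j) (hw0 j)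
  have hsum2 : Q * A - dot q y ≤ Q * B - dot q w := by
    rw [← hsumform, ← hsumform]
    exact Finset.sum_le_sum fun j _ => hwc j (y j) (hy0 j)
  -- Step 1 : Q ≤ P
  have hle : Q ≤ P := by
    by_contra hPQ
    push_neg at hPQ
    rcases le_or_gt A B with hAB | hAB
    · have h1 : P * A < Q * A := mul_lt_mul_of_pos_right hPQ hA
      have h2 : Q * A ≤ Q * B := mul_le_mul_of_nonneg_left hAB hQpos.le
      linarith
    · nlinarith [mul_pos (sub_pos.mpr hPQ) (sub_pos.mpr hAB)]
  rcases hle.lt_or_eq with hlt | heq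
  -- Case Q < P : the pointwise min works
  · set y' : M → ℝ := fun j => min (w j) (y j) with hy'
    have hy'0 : (0 : M → ℝ) ≤ y' := fun j => le_min (hw0 j) (hy0 j)
    have hveq : ∀ j, v j (y' j) = v j (w j) := by
      intro j
      rcases le_total (w j) (y j) with h | h
      · rw [hy']; simp only [min_eq_left h]
      · have hmin : y' j = y j := by rw [hy']; simp only [min_eq_right h]
        rw [hmin]
        have h1 := hyc j (w j) (hw0 j)
        have h2 := hwc j (y j) (hy0 j)
        have hmle : v j (y j) ≤ v j (w j) :=
          hv.mono j (Set.mem_Ici.mpr (hy0 j)) (Set.mem_Ici.mpr (hw0 j)) h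
        have hge : v j (w j) ≤ v j (y j) := by
          by_contra hcon
          push_neg at hcon
          nlinarith [mul_lt_mul_of_pos_right hlt (sub_pos.mpr hcon)]
        linarith
    have huB : sepU v y' = B := by
      rw [hBdef]
      exact Finset.sum_congr rfl fun j _ => hveq j
    refine ⟨y', ?_, fun j => min_le_right _ _⟩
    refine mem_gale_of_coord hv hb' hy'0 huB hB ?_
    intro j x hx
    have h1 := hwc j x hx
    have h2 : q j * y' j ≤ q j * w j :=
      mul_le_mul_of_nonneg_left (min_le_left _ _) (hq0 j)
    rw [hveq j] at *
    calc b' / B * v j x - q j * x ≤ b' / B * v j (w j) - q j * w j := h1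
      _ ≤ b' / B * v j (w j) - q j * y' j := by linarith
  -- Case Q = P : move along the segment from min(w,y) to y
  · have heq' : b' / B = b / A := heq
    have hBA : B < A := by
      have hcross : b' * A = b * B := by
        rw [div_eq_div_iff hB.ne' hA.ne'] at heq'
        linarith [heq']
      nlinarith
    set m : M → ℝ := fun j => min (w j) (y j) with hm
    have hm0 : (0 : M → ℝ) ≤ m := fun j => le_min (hw0 j) (hy0 j)
    have hmw : m ≤ w := fun j => min_le_left _ _
    have hmy : m ≤ y := fun j => min_le_right _ _
    set c := sepU v m with hc
    have hcB : c ≤ B := sepU_mono hv hm0 hmw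
    have hcA : c < A := lt_of_le_of_lt hcB hBA
    set t := (B - c) / (A - c) with ht
    have ht0 : 0 ≤ t := div_nonneg (by linarith) (by linarith)
    have ht1 : t ≤ 1 := (div_le_one (by linarith)).mpr (by linarith)
    have htAc : t * (A - c) = B - c := div_mul_cancel₀ _ (sub_pos.mpr hcA).ne'
    set x : M → ℝ := fun j => (1 - t) * m j + t * y j with hx
    have hx0 : (0 : M → ℝ) ≤ x := fun j =>
      add_nonneg (mul_nonneg (by linarith) (hm0 j)) (mul_nonneg ht0 (hy0 j))
    have hxy : x ≤ y := by
      intro j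
      have := mul_le_mul_of_nonneg_left (hmy j) (by linarith : (0:ℝ) ≤ 1 - t)
      calc x j = (1 - t) * m j + t * y j := rfl
        _ ≤ (1 - t) * y j + t * y j := by linarith
        _ = y j := by ring
    -- both m j and y j maximize s ↦ P * v j s - q j * s
    have hmopt : ∀ j, ∀ s : ℝ, 0 ≤ s →
        P * v j s - q j * s ≤ P * v j (m j) - q j * m j := by
      intro j s hs
      rcases le_total (w j) (y j) with h | h
      · have hmj : m j = w j := by rw [hm]; simp only [min_eq_left h]
        rw [hmj]
        have := hwc j s hs
        rw [heq] at this
        exact this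
      · have hmj : m j = y j := by rw [hm]; simp only [min_eq_right h]
        rw [hmj]
        exact hyc j s hs
    have hE : ∀ j, P * v j (m j) - q j * m j = P * v j (y j) - q j * y j :=
      fun j => le_antisymm (hyc j (m j) (hm0 j)) (hmopt j (y j) (hy0 j))
    have hqx : ∀ j, q j * x j = (1 - t) * (q j * m j) + t * (q j * y j) := by
      intro j
      show q j * ((1 - t) * m j + t * y j) = _
      ring
    have hveq : ∀ j, v j (x j) = (1 - t) * v j (m j) + t * v j (y j) := by
      intro j
      have hgeq : (1 - t) * v j (m j) + t * v j (y j) ≤ v j (x j) := by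
        have := (hv.concave j).2 (Set.mem_Ici.mpr (hm0 j)) (Set.mem_Ici.mpr (hy0 j))
          (by linarith : (0:ℝ) ≤ 1 - t) ht0 (by ring)
        simpa [smul_eq_mul] using this
      have hstep : P * v j (x j) - q j * x j
          ≤ (1 - t) * (P * v j (m j) - q j * m j) + t * (P * v j (y j) - q j * y j) := by
        rw [hE j]
        have hcollapse : (1 - t) * (P * v j (y j) - q j * y j)
            + t * (P * v j (y j) - q j * y j) = P * v j (y j) - q j * y j := by ring
        rw [hcollapse]
        exact hyc j (x j) (hx0 j)
      have hPle : P * v j (x j) ≤ P * ((1 - t) * v j (m j) + t * v j (y j)) := by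
        nlinarith [hstep, hqx j]
      have hle2 : v j (x j) ≤ (1 - t) * v j (m j) + t * v j (y j) :=
        le_of_mul_le_mul_left (by linarith [hPle]) hPpos
      linarith
    have husum : sepU v x = B := by
      have h1 : sepU v x = (1 - t) * c + t * A := by
        rw [hc, hAdef]
        unfold sepU
        rw [show ∑ j, v j (x j) = ∑ j, ((1 - t) * v j (m j) + t * v j (y j)) from
          Finset.sum_congr rfl fun j _ => hveq j]
        rw [Finset.sum_add_distrib, ← Finset.mul_sum, ← Finset.mul_sum]
      rw [h1]
      linear_combination htAc
    have hxopt : ∀ j, ∀ s : ℝ, 0 ≤ s →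
        P * v j s - q j * s ≤ P * v j (x j) - q j * x j := by
      intro j s hs
      have hval : P * v j (x j) - q j * x j = P * v j (y j) - q j * y j := by
        rw [hveq j, hqx j]
        linear_combination (1 - t) * hE j
      rw [hval]
      exact hyc j s hs
    refine ⟨x, ?_, hxy⟩
    refine mem_gale_of_coord hv hb' hx0 husum hB ?_
    intro j s hs
    rw [heq']
    exact hxopt j s hs


end
end
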